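/- arXiv:1601.01886 — 7 statements merged into one kernel-verified Lean document; each statement's English description precedes it below -/
import Mathlib

section
/- Let ℓ and n be integers with ℓ ≥ 1 and n > e^{ℓ+2}. Then π_l(G_{n,ℓ}) > ℓ; that is, there exists an assignment of color lists of size ℓ to the vertices of G_{n,ℓ} for which no coloring choosing each vertex's color from its list is nonrepetitive. -/
/-- `p 0, p 1, …, p m` is a simple path in `G` (injective, consecutive vertices adjacent). -/
def IsPathSeq {V : Type} (G : SimpleGraph V) (p : ℕ → V) (m : ℕ) : Prop :=
  (∀ i j, i ≤ m → j ≤ m → p i = p j → i = j) ∧ ∀ i < m, G.Adj (p i) (p (i + 1))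

/-- A vertex coloring `φ` of `G` is nonrepetitive if there is no simple path
`v₁ v₂ … v₂ᵣ` (`r ≥ 1`) in `G` with `φ(vᵢ) = φ(v_{r+i})` for all `i ∈ {1,…,r}`. -/
def Nonrepetitive {V : Type} (G : SimpleGraph V) (φ : V → ℕ) : Prop :=
  ∀ r : ℕ, 1 ≤ r → ∀ p : ℕ → V, IsPathSeq G p (2 * r - 1) →
    ∃ i < r, φ (p i) ≠ φ (p (i + r))

/-- `G` is nonrepetitively `ℓ`-choosable: every assignment of color lists of size
at least `ℓ` admits a nonrepetitive coloring from the lists. -/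
def ThueChoosable {V : Type} (G : SimpleGraph V) (ℓ : ℕ) : Prop :=
  ∀ L : V → Finset ℕ, (∀ v, ℓ ≤ (L v).card) →
    ∃ φ : V → ℕ, (∀ v, φ v ∈ L v) ∧ Nonrepetitive G φ

/-- The vertex set of the graph `G_{n,ℓ}`: `Sum.inl i` is the vertex `v_{2i+1}`
(at odd position `2i+1`, for `i = 0,…,n-1`), and `Sum.inr (i, j)` is the vertex
`v_{2i+2}^j` (at even position `2i+2`), where the even positions are blown up
into independent sets of size `(ℓn).choose ℓ`. -/
def GnlVert (n ℓ : ℕ) : Type := Fin n ⊕ Fin n × Fin ((ℓ * n).choose ℓ)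

/-- The position (in `{1, …, 2n}`) of a vertex of `G_{n,ℓ}`. -/
def GnlPos {n ℓ : ℕ} : GnlVert n ℓ → ℕ
  | Sum.inl i => 2 * i.val + 1
  | Sum.inr p => 2 * p.1.val + 2

/-- The graph `G_{n,ℓ}`: two vertices are adjacent iff their positions differ by exactly 1. -/
def Gnl (n ℓ : ℕ) : SimpleGraph (GnlVert n ℓ) where
  Adj u v := GnlPos u = GnlPos v + 1 ∨ GnlPos v = GnlPos u + 1
  symm := by constructor; intro u v h; exact h.symm
  loopless := by constructor; intro u h; rcases h with h | h <;> omega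

/-! Give the odd vertices pairwise disjoint blocks of `ℓ` colours from `[0, ℓn)` and give the
copies at each even level all `ℓ`-subsets of `[0, ℓn)` as lists. In a colouring from these lists,
call a pair (even level `b`, odd vertex `j`) blocked if no copy at level `b` repeats the colour of
`j`. Since the odd colours are distinct, every level blocks fewer than `ℓ` odd vertices, so there
are at most `(ℓ - 1) n` blocked pairs.

On the other hand, a zigzag path of `2(2t - 1)` vertices starting at even level `a` becomes a square
once each of its even vertices is replaced by a copy repeating the colour of its partner at distance
`2t - 1`; so a nonrepetitive colouring has a blocked pair at distance `2t - 1` in each of the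
`n + 1 - 2t` windows. A pair lies in at most `t` of these windows, whence at least
`∑_{t ≤ n/2} (n + 1 - 2t)/t = (n + 1) H_{n/2} - 2 ⌊n/2⌋` blocked pairs, which is more than
`(ℓ - 1) n` as soon as `H_{n/2} ≥ ℓ + 1`, i.e. for `n > e^{ℓ+2}`. -/

open Finset

theorem Finset.le_mul_card_of_forall_exists_mem_Ico {α : Type*} (X : Finset α) (f : α → ℕ)
    {N t : ℕ} (h : ∀ a < N, ∃ x ∈ X, f x ∈ Ico a (a + t)) : N ≤ t * #X := by
  classical
  calc N = #(range N) := (card_range N).symm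
    _ ≤ #(X.biUnion fun x => Ico (f x + 1 - t) (f x + 1)) := card_le_card fun a ha => by
        obtain ⟨x, hx, hfx⟩ := h a (mem_range.1 ha)
        rw [mem_Ico] at hfx
        exact mem_biUnion.2 ⟨x, hx, mem_Ico.2 ⟨by omega, by omega⟩⟩
    _ ≤ ∑ x ∈ X, #(Ico (f x + 1 - t) (f x + 1)) := card_biUnion_le
    _ ≤ ∑ _x ∈ X, t := sum_le_sum fun x _ => by rw [Nat.card_Ico]; omega
    _ = t * #X := by rw [sum_const, smul_eq_mul, mul_comm]

theorem sum_Icc_sub_mul_div_eq (x c : ℝ) (T : ℕ) :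
    ∑ t ∈ Icc 1 T, (x - c * t) / t = x * harmonic T - c * T := by
  have hterm : ∀ t ∈ Icc 1 T, (x - c * t) / t = x * (t : ℝ)⁻¹ - c := fun t ht => by
    have : (t : ℝ) ≠ 0 := by exact_mod_cast (Nat.one_le_iff_ne_zero.1 (mem_Icc.1 ht).1)
    field_simp
  rw [sum_congr rfl hterm, sum_sub_distrib, ← mul_sum, harmonic_eq_sum_Icc]
  simp [mul_comm]

theorem add_one_le_harmonic_half {n ℓ : ℕ} (hn : Real.exp ((ℓ : ℝ) + 2) < n) :
    (ℓ : ℝ) + 1 ≤ harmonic (n / 2) := by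
  have hhalf : (n : ℝ) ≤ 2 * ((n / 2 : ℕ) + 1 : ℝ) := by
    exact_mod_cast (by omega : n ≤ 2 * (n / 2 + 1))
  have he : Real.exp ((ℓ : ℝ) + 2) = Real.exp ((ℓ : ℝ) + 1) * Real.exp 1 := by
    rw [← Real.exp_add]; ring_nf
  have hexp : Real.exp ((ℓ : ℝ) + 1) ≤ ((n / 2 + 1 : ℕ) : ℝ) := by
    have := Real.exp_one_gt_d9
    push_cast
    nlinarith [Real.exp_pos ((ℓ : ℝ) + 1)]
  calc (ℓ : ℝ) + 1 ≤ Real.log ((n / 2 + 1 : ℕ) : ℝ) :=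
        (Real.le_log_iff_exp_le (by positivity)).2 hexp
    _ ≤ harmonic (n / 2) := log_add_one_le_harmonic _

namespace Gnl

variable {n ℓ : ℕ}

theorem isPathSeq_of_gnlPos_eq {p : ℕ → GnlVert n ℓ} {c m : ℕ}
    (h : ∀ i ≤ m, GnlPos (p i) = c + i) : IsPathSeq (Gnl n ℓ) p m := by
  refine ⟨fun i j hi hj hij => ?_, fun i hi => Or.inr ?_⟩
  · have := h i hi
    rw [hij, h j hj] at this
    omega
  · rw [h i hi.le, h (i + 1) hi]
    omega

section Blocked

variable (φ : GnlVert n ℓ → ℕ)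

def Blocked (b j : Fin n) : Prop := ∀ g, φ (.inr (b, g)) ≠ φ (.inl j)

open Classical in
noncomputable def blockedPairs : Finset (Fin n × Fin n) := {x | Blocked φ x.1 x.2}

/- For `x = (b, j)`, the copies at level `b` and the odd vertex `j` are at distance `2 * gap x - 1`,
and they are the `i`-th and `(i + 2 * gap x - 1)`-th vertices of the zigzag path starting at level
`a`, for some `i < 2 * gap x - 1`, iff `a ≤ anchor x < a + gap x`. -/
def gap (x : Fin n × Fin n) : ℕ :=
  if (x.1 : ℕ) < x.2 then (x.2 : ℕ) - x.1 else (x.1 : ℕ) + 1 - x.2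

def anchor (x : Fin n × Fin n) : ℕ := min x.1 (x.2 - 1)

theorem exists_mem_blockedPairs_window (hφ : Nonrepetitive (Gnl n ℓ) φ) {t a : ℕ}
    (ht : 1 ≤ t) (hat : a + 2 * t ≤ n) :
    ∃ x ∈ blockedPairs φ, gap x = t ∧ anchor x ∈ Ico a (a + t) := by
  by_contra! hfree
  let odd : ℕ → GnlVert n ℓ := fun j => if h : j < n then .inl ⟨j, h⟩ else .inl ⟨0, by omega⟩
  have hodd : ∀ j (hj : j < n), odd j = .inl ⟨j, hj⟩ := fun j hj => dif_pos hj
  -- the even vertex at level `a + k` of the square must repeat the colour of `odd (partner k)`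
  let partner : ℕ → ℕ := fun k => if k < t then a + k + t else a + k + 1 - t
  have hcopy : ∀ k, ∃ v, k ≤ 2 * t - 2 →
      GnlPos v = 2 * (a + k) + 2 ∧ φ v = φ (odd (partner k)) := by
    intro k
    refine if hk : k ≤ 2 * t - 2 then ?_ else ⟨odd 0, fun h => absurd h hk⟩
    have hj : partner k < n := by simp only [partner]; split_ifs <;> omega
    have hnb : ¬ Blocked φ ⟨a + k, by omega⟩ ⟨partner k, hj⟩ := fun hb => by
      have := hfree (⟨a + k, by omega⟩, ⟨partner k, hj⟩) (by simpa [blockedPairs] using hb)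
      simp only [gap, anchor, partner, mem_Ico] at this
      split_ifs at this <;> omega
    obtain ⟨g, hg⟩ : ∃ g, φ (.inr (⟨a + k, _⟩, g)) = φ (.inl ⟨partner k, hj⟩) := by
      simpa [Blocked] using hnb
    exact ⟨.inr (⟨a + k, by omega⟩, g), fun _ => ⟨rfl, by rw [hg, hodd _ hj]⟩⟩
  choose e he using hcopy
  let p : ℕ → GnlVert n ℓ := fun i => if i % 2 = 0 then e (i / 2) else odd (a + i / 2 + 1)
  have hp_even (k : ℕ) : p (2 * k) = e k := by simp [p]
  have hp_odd (k : ℕ) : p (2 * k + 1) = odd (a + k + 1) := by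
    simp [p, show (2 * k + 1) / 2 = k by omega]
  have hpath : IsPathSeq (Gnl n ℓ) p (2 * (2 * t - 1) - 1) :=
    isPathSeq_of_gnlPos_eq (c := 2 * a + 2) fun i hi => by
      obtain ⟨k, rfl | rfl⟩ := Nat.even_or_odd' i
      · rw [hp_even, (he k (by omega)).1]
        omega
      · rw [hp_odd, hodd _ (by omega)]
        simp only [GnlPos]
        omega
  obtain ⟨i, hi, hne⟩ := hφ (2 * t - 1) (by omega) p hpath
  apply hne
  obtain ⟨k, rfl | rfl⟩ := Nat.even_or_odd' i
  · rw [hp_even, (he k (by omega)).2, show 2 * k + (2 * t - 1) = 2 * (k + t - 1) + 1 by omega,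
      hp_odd]
    simp only [partner, if_pos (show k < t by omega)]
    congr 2
    omega
  · rw [hp_odd, show 2 * k + 1 + (2 * t - 1) = 2 * (k + t) by omega, hp_even,
      (he (k + t) (by omega)).2]
    simp only [partner, if_neg (show ¬ k + t < t by omega)]
    congr 2
    omega

theorem le_mul_card_filter_gap (hφ : Nonrepetitive (Gnl n ℓ) φ) {t : ℕ} (ht : 1 ≤ t)
    (htn : 2 * t ≤ n) : n + 1 - 2 * t ≤ t * #{x ∈ blockedPairs φ | gap x = t} :=
  le_mul_card_of_forall_exists_mem_Ico _ anchor fun a ha => by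
    obtain ⟨x, hx, hgap, hwin⟩ := exists_mem_blockedPairs_window φ hφ (a := a) ht (by omega)
    exact ⟨x, mem_filter.2 ⟨hx, hgap⟩, hwin⟩

theorem sum_div_le_card_blockedPairs (hφ : Nonrepetitive (Gnl n ℓ) φ) :
    ∑ t ∈ Icc 1 (n / 2), ((n : ℝ) + 1 - 2 * t) / t ≤ #(blockedPairs φ) := by
  calc ∑ t ∈ Icc 1 (n / 2), ((n : ℝ) + 1 - 2 * t) / t
      ≤ ∑ t ∈ Icc 1 (n / 2), (#{x ∈ blockedPairs φ | gap x = t} : ℝ) :=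
        sum_le_sum fun t ht => by
          obtain ⟨ht1, htn⟩ := mem_Icc.1 ht
          have hcover := le_mul_card_filter_gap φ hφ ht1 (by omega)
          have hcast : ((n + 1 - 2 * t : ℕ) : ℝ) = n + 1 - 2 * t := by
            rw [Nat.cast_sub (by omega)]
            push_cast
            ring
          rw [div_le_iff₀ (by positivity), ← hcast]
          exact_mod_cast hcover.trans_eq (mul_comm _ _)
    _ = #{x ∈ blockedPairs φ | gap x ∈ Icc 1 (n / 2)} := by
        exact_mod_cast sum_card_fiberwise_eq_card_filter _ _ _
    _ ≤ #(blockedPairs φ) := by exact_mod_cast card_filter_le _ _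

end Blocked

noncomputable def subsetEquiv (n ℓ : ℕ) :
    Fin ((ℓ * n).choose ℓ) ≃ powersetCard ℓ (range (ℓ * n)) :=
  (Fintype.equivFinOfCardEq (by simp)).symm

noncomputable def thueLists (n ℓ : ℕ) : GnlVert n ℓ → Finset ℕ
  | .inl i => Ico (ℓ * i) (ℓ * i + ℓ)
  | .inr (_, g) => subsetEquiv n ℓ g

theorem card_thueLists : ∀ v : GnlVert n ℓ, #(thueLists n ℓ v) = ℓ
  | .inl i => by simp [thueLists]
  | .inr (_, g) => (mem_powersetCard.1 (subsetEquiv n ℓ g).2).2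

section Lists

variable {φ : GnlVert n ℓ → ℕ} (hφ : ∀ v, φ v ∈ thueLists n ℓ v)
include hφ

theorem div_eq_of_mem_thueLists (i : Fin n) : φ (.inl i) / ℓ = i := by
  have := mem_Ico.1 (hφ (.inl i))
  exact Nat.div_eq_of_lt_le (by linarith) (by linarith)

theorem lt_of_mem_thueLists (i : Fin n) : φ (.inl i) < ℓ * n := by
  have := mem_Ico.1 (hφ (.inl i))
  nlinarith [i.2]

open Classical in
theorem card_blocked_lt (b : Fin n) : #{j | Blocked φ b j} < ℓ := by
  by_contra! hle
  have hc : Function.Injective fun j : Fin n => φ (.inl j) := fun i j hij => Fin.ext <| by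
    rw [← div_eq_of_mem_thueLists hφ i, ← div_eq_of_mem_thueLists hφ j]
    exact congrArg (· / ℓ) hij
  obtain ⟨A, hAsub, hAcard⟩ := exists_subset_card_eq (n := ℓ)
    (s := ({j | Blocked φ b j} : Finset (Fin n)).image fun j => φ (.inl j))
    (by rwa [card_image_of_injective _ hc])
  have hA : A ∈ powersetCard ℓ (range (ℓ * n)) := by
    refine mem_powersetCard.2 ⟨hAsub.trans fun x hx => ?_, hAcard⟩
    obtain ⟨j, -, rfl⟩ := mem_image.1 hx
    exact mem_range.2 (lt_of_mem_thueLists hφ j)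
  let g := (subsetEquiv n ℓ).symm ⟨A, hA⟩
  have hgA : φ (.inr (b, g)) ∈ A := by simpa [thueLists, g] using hφ (.inr (b, g))
  obtain ⟨j, hj, hjg⟩ := mem_image.1 (hAsub hgA)
  exact (mem_filter.1 hj).2 g hjg.symm

theorem card_blockedPairs_add_le : #(blockedPairs φ) + n ≤ ℓ * n := by
  classical
  have hfiber (b : Fin n) : #{x ∈ blockedPairs φ | x.1 = b} ≤ #{j | Blocked φ b j} :=
    card_le_card_of_injOn Prod.snd
      (fun x hx => by
        obtain ⟨hx, rfl⟩ := mem_filter.1 hx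
        simpa [blockedPairs] using hx)
      (fun x hx y hy hxy => Prod.ext (by simp_all) hxy)
  calc #(blockedPairs φ) + n = ∑ b, (#{x ∈ blockedPairs φ | x.1 = b} + 1) := by
        rw [card_eq_sum_card_fiberwise (f := Prod.fst) (t := univ) (by simp), sum_add_distrib]
        simp
    _ ≤ ∑ _b : Fin n, ℓ := sum_le_sum fun b _ => (hfiber b).trans_lt (card_blocked_lt hφ b)
    _ = ℓ * n := by simp [mul_comm]

theorem not_nonrepetitive (hn : Real.exp ((ℓ : ℝ) + 2) < n) : ¬ Nonrepetitive (Gnl n ℓ) φ := by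
  intro hnr
  have hsquares := sum_div_le_card_blockedPairs φ hnr
  rw [sum_Icc_sub_mul_div_eq] at hsquares
  have hcard : (#(blockedPairs φ) : ℝ) + n ≤ ℓ * n := by
    exact_mod_cast card_blockedPairs_add_le hφ
  have hH : ((n : ℝ) + 1) * (ℓ + 1) ≤ (n + 1) * harmonic (n / 2) :=
    mul_le_mul_of_nonneg_left (add_one_le_harmonic_half hn) (by positivity)
  have hT : 2 * ((n / 2 : ℕ) : ℝ) ≤ n := by exact_mod_cast Nat.mul_div_le n 2
  nlinarith

end Lists

end Gnl

theorem stmt2_general (n ℓ : ℕ) (hn : Real.exp ((ℓ : ℝ) + 2) < (n : ℝ)) :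
    ¬ ThueChoosable (Gnl n ℓ) ℓ ∧
      ∃ L : GnlVert n ℓ → Finset ℕ, (∀ v, (L v).card = ℓ) ∧
        ∀ φ : GnlVert n ℓ → ℕ, (∀ v, φ v ∈ L v) → ¬ Nonrepetitive (Gnl n ℓ) φ := by
  refine ⟨fun hchoosable => ?_, Gnl.thueLists n ℓ, Gnl.card_thueLists,
    fun φ hφ => Gnl.not_nonrepetitive hφ hn⟩
  obtain ⟨φ, hφ, hnr⟩ := hchoosable (Gnl.thueLists n ℓ) fun v => (Gnl.card_thueLists v).ge
  exact Gnl.not_nonrepetitive hφ hn hnr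

/-- For `ℓ ≥ 1` and `n > e^{ℓ+2}`, the Thue choice number of `G_{n,ℓ}` is greater
than `ℓ`: there is an assignment of color lists of size `ℓ` to the vertices of
`G_{n,ℓ}` for which no coloring from the lists is nonrepetitive. -/
theorem stmt2 (n ℓ : ℕ) (hℓ : 1 ≤ ℓ) (hn : Real.exp ((ℓ : ℝ) + 2) < (n : ℝ)) :
    ¬ ThueChoosable (Gnl n ℓ) ℓ ∧
      ∃ L : GnlVert n ℓ → Finset ℕ, (∀ v, (L v).card = ℓ) ∧
        ∀ φ : GnlVert n ℓ → ℕ, (∀ v, φ v ∈ L v) → ¬ Nonrepetitive (Gnl n ℓ) φ :=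
  stmt2_general n ℓ hn
end

section
/- Let n, ℓ ≥ 1 be integers and φ a vertex coloring of G_{n,ℓ}. Let a ≥ 1 and k ≥ 0 be integers with a + 4k + 1 ≤ 2n, and suppose that φ(v_i) ∈ φ(V_{i+2k+1}) for every odd i ∈ [a, a+2k] and φ(v_{i+2k+1}) ∈ φ(V_i) for every even i ∈ [a, a+2k]. Then there exists a simple path w_a, w_{a+1}, …, w_{a+4k+1} in G_{n,ℓ} with w_j ∈ V_j for every j ∈ [a, a+4k+1] whose color sequence is a repetition, i.e., φ(w_j) = φ(w_{j+2k+1}) for all j ∈ [a, a+2k]; consequently φ is not nonrepetitive. -/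
/-!
Every odd position of `G_{n,ℓ}` is occupied, so for each `i ∈ [a, a+2k]` the odd one of the
positions `i`, `i+2k+1` carries a vertex, and the hypotheses provide a vertex at the other
position with the same color. Taking these matched pairs as the two halves of a sequence that
visits the positions `a, a+1, …, a+4k+1` in order gives a path (consecutive positions are
adjacent, distinct positions give distinct vertices) whose color sequence is a repetition.
-/

lemma not_nonrepetitive_of_repetition {V : Type} {G : SimpleGraph V} {φ : V → ℕ}
    {p : ℕ → V} {r : ℕ} (hr : 1 ≤ r) (hp : IsPathSeq G p (2 * r - 1))
    (hrep : ∀ i < r, φ (p i) = φ (p (i + r))) : ¬ Nonrepetitive G φ := fun h =>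
  let ⟨i, hi, hne⟩ := h r hr p hp
  hne (hrep i hi)

lemma exists_gnlPos_eq_of_odd {n ℓ p : ℕ} (hp : Odd p) (hpn : p ≤ 2 * n) :
    ∃ u : GnlVert n ℓ, GnlPos u = p := by
  obtain ⟨m, rfl⟩ := hp
  exact ⟨Sum.inl ⟨m, by omega⟩, rfl⟩

lemma Gnl.adj_of_gnlPos_eq_succ {n ℓ : ℕ} {u v : GnlVert n ℓ} (h : GnlPos v = GnlPos u + 1) :
    (Gnl n ℓ).Adj u v :=
  Or.inr h

lemma isPathSeq_gnl_of_gnlPos_eq {n ℓ : ℕ} {p : ℕ → GnlVert n ℓ} {a m : ℕ}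
    (hp : ∀ i ≤ m, GnlPos (p i) = a + i) : IsPathSeq (Gnl n ℓ) p m := by
  refine ⟨fun i j hi hj hij => ?_, fun i hi => Gnl.adj_of_gnlPos_eq_succ ?_⟩
  · have := congrArg GnlPos hij
    rw [hp i hi, hp j hj] at this
    omega
  · rw [hp i hi.le, hp (i + 1) hi]
    rfl

lemma exists_gnlPos_pair_color_eq {n ℓ : ℕ} (φ : GnlVert n ℓ → ℕ) {i k : ℕ}
    (hin : i + 2 * k + 1 ≤ 2 * n)
    (hodd : Odd i → ∀ u : GnlVert n ℓ, GnlPos u = i →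
      φ u ∈ φ '' {w : GnlVert n ℓ | GnlPos w = i + 2 * k + 1})
    (heven : Even i → ∀ u : GnlVert n ℓ, GnlPos u = i + 2 * k + 1 →
      φ u ∈ φ '' {w : GnlVert n ℓ | GnlPos w = i}) :
    ∃ x y : GnlVert n ℓ, GnlPos x = i ∧ GnlPos y = i + 2 * k + 1 ∧ φ x = φ y := by
  rcases Nat.even_or_odd i with hi | hi
  · obtain ⟨v, hv⟩ := exists_gnlPos_eq_of_odd (ℓ := ℓ) (hi.add (even_two_mul k)).add_one hin
    obtain ⟨x, hx, hxv⟩ := heven hi v hv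
    exact ⟨x, v, hx, hv, hxv⟩
  · obtain ⟨v, hv⟩ := exists_gnlPos_eq_of_odd (ℓ := ℓ) hi (show i ≤ 2 * n by omega)
    obtain ⟨y, hy, hyv⟩ := hodd hi v hv
    exact ⟨v, y, hv, hy, hyv.symm⟩

theorem stmt4_general (n ℓ : ℕ)
    (φ : GnlVert n ℓ → ℕ) (a k : ℕ) (hak : a + 4 * k + 1 ≤ 2 * n)
    (hodd : ∀ i, a ≤ i → i ≤ a + 2 * k → Odd i →
      ∀ u : GnlVert n ℓ, GnlPos u = i →
        φ u ∈ φ '' {w : GnlVert n ℓ | GnlPos w = i + 2 * k + 1})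
    (heven : ∀ i, a ≤ i → i ≤ a + 2 * k → Even i →
      ∀ u : GnlVert n ℓ, GnlPos u = i + 2 * k + 1 →
        φ u ∈ φ '' {w : GnlVert n ℓ | GnlPos w = i}) :
    (∃ w : ℕ → GnlVert n ℓ,
        (∀ j, a ≤ j → j ≤ a + 4 * k + 1 → GnlPos (w j) = j) ∧
        (∀ j j', a ≤ j → j ≤ a + 4 * k + 1 → a ≤ j' → j' ≤ a + 4 * k + 1 →
          w j = w j' → j = j') ∧
        (∀ j, a ≤ j → j < a + 4 * k + 1 → (Gnl n ℓ).Adj (w j) (w (j + 1))) ∧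
        (∀ j, a ≤ j → j ≤ a + 2 * k → φ (w j) = φ (w (j + 2 * k + 1)))) ∧
      ¬ Nonrepetitive (Gnl n ℓ) φ := by
  have : Nonempty (GnlVert n ℓ) := ⟨Sum.inl ⟨0, by omega⟩⟩
  choose! x y hx hy hxy using fun i (hia : a ≤ i) (hib : i ≤ a + 2 * k) =>
    exists_gnlPos_pair_color_eq φ (by omega) (hodd i hia hib) (heven i hia hib)
  set w : ℕ → GnlVert n ℓ := fun j => if j ≤ a + 2 * k then x j else y (j - (2 * k + 1))
  have hpos : ∀ j, a ≤ j → j ≤ a + 4 * k + 1 → GnlPos (w j) = j := by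
    intro j hja hjb
    by_cases hj : j ≤ a + 2 * k
    · simp only [w, if_pos hj, hx j hja hj]
    · simp only [w, if_neg hj, hy (j - (2 * k + 1)) (by omega) (by omega)]
      omega
  have hrep : ∀ j, a ≤ j → j ≤ a + 2 * k → φ (w j) = φ (w (j + 2 * k + 1)) := by
    intro j hja hjb
    simp only [w, if_pos hjb, if_neg (show ¬ j + 2 * k + 1 ≤ a + 2 * k by omega),
      show j + 2 * k + 1 - (2 * k + 1) = j by omega, hxy j hja hjb]
  have hpath : IsPathSeq (Gnl n ℓ) (fun i => w (a + i)) (2 * (2 * k + 1) - 1) :=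
    isPathSeq_gnl_of_gnlPos_eq fun i hi => hpos (a + i) (by omega) (by omega)
  refine ⟨⟨w, hpos, fun j j' hja hjb hja' hjb' hw => ?_, fun j hja hjb => ?_, hrep⟩,
    not_nonrepetitive_of_repetition (by omega) hpath fun i hi => ?_⟩
  · rw [← hpos j hja hjb, ← hpos j' hja' hjb', hw]
  · exact Gnl.adj_of_gnlPos_eq_succ (by rw [hpos j hja hjb.le, hpos (j + 1) (by omega) hjb])
  · simpa only [add_assoc] using hrep (a + i) (by omega) (by omega)

/-- With `V_p` denoting the set of vertices of `G_{n,ℓ}` at position `p`, suppose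
`φ(v_i) ∈ φ(V_{i+2k+1})` for every odd `i ∈ [a, a+2k]` and `φ(v_{i+2k+1}) ∈ φ(V_i)`
for every even `i ∈ [a, a+2k]`, where `a ≥ 1` and `a + 4k + 1 ≤ 2n`.  Then there is a
simple path `w_a, …, w_{a+4k+1}` in `G_{n,ℓ}` with `w_j ∈ V_j` whose color sequence is
a repetition, and consequently `φ` is not nonrepetitive. -/
theorem stmt4 (n ℓ : ℕ) (hn : 1 ≤ n) (hℓ : 1 ≤ ℓ)
    (φ : GnlVert n ℓ → ℕ) (a k : ℕ) (ha : 1 ≤ a) (hak : a + 4 * k + 1 ≤ 2 * n)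
    (hodd : ∀ i, a ≤ i → i ≤ a + 2 * k → Odd i →
      ∀ u : GnlVert n ℓ, GnlPos u = i →
        φ u ∈ φ '' {w : GnlVert n ℓ | GnlPos w = i + 2 * k + 1})
    (heven : ∀ i, a ≤ i → i ≤ a + 2 * k → Even i →
      ∀ u : GnlVert n ℓ, GnlPos u = i + 2 * k + 1 →
        φ u ∈ φ '' {w : GnlVert n ℓ | GnlPos w = i}) :
    (∃ w : ℕ → GnlVert n ℓ,
        (∀ j, a ≤ j → j ≤ a + 4 * k + 1 → GnlPos (w j) = j) ∧
        (∀ j j', a ≤ j → j ≤ a + 4 * k + 1 → a ≤ j' → j' ≤ a + 4 * k + 1 →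
          w j = w j' → j = j') ∧
        (∀ j, a ≤ j → j < a + 4 * k + 1 → (Gnl n ℓ).Adj (w j) (w (j + 1))) ∧
        (∀ j, a ≤ j → j ≤ a + 2 * k → φ (w j) = φ (w (j + 2 * k + 1)))) ∧
      ¬ Nonrepetitive (Gnl n ℓ) φ :=
  stmt4_general n ℓ φ a k hak hodd heven
end

section
/- Every finite tree of pathwidth k has a path-partition of height at most 2k. -/
/-- `B 0, …, B (m-1)` is a path decomposition of `G`: every vertex appears in some bag,
the bags containing a given vertex form an interval of indices, and each edge lies in a bag. -/
def IsPathDecomp {V : Type} (G : SimpleGraph V) {m : ℕ} (B : Fin m → Finset V) : Prop :=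
  (∀ v, ∃ i, v ∈ B i) ∧
  (∀ v, ∀ i j k : Fin m, i ≤ j → j ≤ k → v ∈ B i → v ∈ B k → v ∈ B j) ∧
  (∀ u v, G.Adj u v → ∃ i, u ∈ B i ∧ v ∈ B i)

/-- `G` has a path decomposition of width at most `k`. -/
def PathwidthLE {V : Type} (G : SimpleGraph V) (k : ℕ) : Prop :=
  ∃ (m : ℕ) (B : Fin m → Finset V), IsPathDecomp G B ∧ ∀ i, (B i).card ≤ k + 1

/-- The pathwidth of `G`: the least width of a path decomposition of `G`. -/
noncomputable def pathwidth {V : Type} (G : SimpleGraph V) : ℕ :=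
  sInf {k | PathwidthLE G k}

/-- A path-partition of a tree `T`: a rooted tree `Q` (on index type `ι`) together with
a collection `P x` (`x : ι`) of vertex-disjoint paths of `T` partitioning `V(T)`, such
that `x y` is an edge of `Q` iff some edge of `T` joins a vertex of `P x` to a vertex
of `P y`. -/
structure PathPartition {V : Type} (T : SimpleGraph V) (ι : Type) where
  Q : SimpleGraph ι
  root : ι
  isTree : Q.IsTree
  P : ι → Set V
  disjoint : ∀ x y, x ≠ y → Disjoint (P x) (P y)
  cover : ∀ v, ∃ x, v ∈ P x
  isPath : ∀ x, ∃ (m : ℕ) (f : ℕ → V), IsPathSeq T f m ∧ P x = {v | ∃ i ≤ m, f i = v}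
  adj_iff : ∀ x y, Q.Adj x y ↔ x ≠ y ∧ ∃ u ∈ P x, ∃ w ∈ P y, T.Adj u w

/-- The level of a vertex `v` of `T`: the height in the rooted tree `Q` (distance from
the root) of the index `x` with `v ∈ P x`. -/
noncomputable def PathPartition.level {V ι : Type} {T : SimpleGraph V}
    (PP : PathPartition T ι) (v : V) : ℕ :=
  PP.Q.dist PP.root (Classical.choose (PP.cover v))

/-- The minimum level of a vertex on the path `f 0, …, f m` of `T`; the base of
the path consists of its vertices of this level. -/
noncomputable def PathPartition.minLevel {V ι : Type} {T : SimpleGraph V}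
    (PP : PathPartition T ι) (f : ℕ → V) (m : ℕ) : ℕ :=
  sInf {l | ∃ i ≤ m, PP.level (f i) = l}

/-- Every ascending path of `T` is `φ`-good: for every simple path `f 0, …, f m`
whose first vertex lies in its base (i.e. an ascending path enumerated from its source)
and every way of reading its color sequence as a near repetition
`x₁…x_r y₁…y_g x₁…x_r` (`r ≥ 1`, `m + 1 = 2r + g`), strictly more than `r` of the `g`
gap vertices `f r, …, f (r+g-1)` lie in the base of the path. -/
def PathPartition.AscGood {V ι : Type} {T : SimpleGraph V}
    (PP : PathPartition T ι) (φ : V → ℕ) : Prop :=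
  ∀ (m : ℕ) (f : ℕ → V), IsPathSeq T f m →
    PP.level (f 0) = PP.minLevel f m →
    ∀ r g : ℕ, 1 ≤ r → m + 1 = 2 * r + g →
      (∀ i < r, φ (f i) = φ (f (r + g + i))) →
      r < {i : ℕ | r ≤ i ∧ i < r + g ∧ PP.level (f i) = PP.minLevel f m}.ncard

/-!
Induction on the width `k`, for a connected vertex set `S` with a path decomposition of width `k`.
A path `R` in `S` from a vertex of the first nonempty bag to a vertex of the last one meets every
bag, so every connected piece of `S \ R` has width at most `k - 1` and, by induction,
path-partitions of height at most `2k - 2` rooted at any of its vertices. Taking `R` as the root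
path and hanging these partitions below it gives height `2k - 1`. To root the partition at a vertex
`c` off `R`, replace `R` by a path from `c` to `R` followed by the end of `R`: the rest `t` of `R`
lies in a single component `D` of the complement, which, rooted at `t`, has height at most
`2k - 1`; so the whole partition has height at most `2k`. Contracting the parts of a tree gives a
tree, since every edge of a tree is a bridge.
-/

open Function

lemma Finset.card_filter_le_of_exists_mem {α : Type*} {s : Finset α} {E R : Set α}
    [DecidablePred (· ∈ E)] {k : ℕ} (hs : s.card ≤ k + 1) (hER : Disjoint E R)
    (hR : s.Nonempty → ∃ x ∈ R, x ∈ s) : (s.filter (· ∈ E)).card ≤ k := by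
  rcases s.eq_empty_or_nonempty with rfl | hne
  · simp
  obtain ⟨x, hxR, hxs⟩ := hR hne
  have : (s.filter (· ∈ E)).card < s.card :=
    Finset.card_lt_card <| Finset.filter_ssubset.mpr
      ⟨x, hxs, fun hxE => hER.notMem_of_mem_left hxE hxR⟩
  omega

namespace SimpleGraph

variable {V : Type} {T : SimpleGraph V} {A E S R : Set V} {c : V} {H : ℕ}

/-! ### Connectivity inside a vertex set -/

def ReachableWithin (T : SimpleGraph V) (A : Set V) (u v : V) : Prop :=
  ∃ p : T.Walk u v, ∀ x ∈ p.support, x ∈ A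

def PreconnectedOn (T : SimpleGraph V) (A : Set V) : Prop :=
  ∀ u ∈ A, ∀ v ∈ A, T.ReachableWithin A u v

def componentIn (T : SimpleGraph V) (A : Set V) (c : V) : Set V :=
  {v | T.ReachableWithin A c v}

def IsComponentOf (T : SimpleGraph V) (A E : Set V) : Prop :=
  ∃ c ∈ A, E = T.componentIn A c

namespace ReachableWithin

variable {B : Set V} {u v w : V}

lemma mem_right (h : T.ReachableWithin A u v) : v ∈ A :=
  let ⟨p, hp⟩ := h; hp _ p.end_mem_support

lemma refl (h : u ∈ A) : T.ReachableWithin A u u :=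
  ⟨.nil, by simpa using h⟩

lemma symm (h : T.ReachableWithin A u v) : T.ReachableWithin A v u :=
  let ⟨p, hp⟩ := h; ⟨p.reverse, fun x hx => hp x (by simpa using hx)⟩

lemma trans (h : T.ReachableWithin A u v) (h' : T.ReachableWithin A v w) :
    T.ReachableWithin A u w := by
  obtain ⟨p, hp⟩ := h
  obtain ⟨q, hq⟩ := h'
  refine ⟨p.append q, fun x hx => ?_⟩
  rcases Walk.mem_support_append_iff p q |>.mp hx with hx | hx
  exacts [hp x hx, hq x hx]

lemma mono (hAB : A ⊆ B) (h : T.ReachableWithin A u v) : T.ReachableWithin B u v :=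
  let ⟨p, hp⟩ := h; ⟨p, fun x hx => hAB (hp x hx)⟩

lemma trans_adj (h : T.ReachableWithin A u v) (hvw : T.Adj v w) (hw : w ∈ A) :
    T.ReachableWithin A u w := by
  refine h.trans ⟨.cons hvw .nil, fun x hx => ?_⟩
  rcases List.mem_cons.mp hx with rfl | hx
  · exact h.mem_right
  · simp_all

end ReachableWithin

lemma Walk.reachableWithin_support {u v x : V} (p : T.Walk u v) (hx : x ∈ p.support) :
    T.ReachableWithin {y | y ∈ p.support} u x := by
  classical
  exact ⟨p.takeUntil x hx, fun y hy => p.support_takeUntil_subset_support hx hy⟩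

lemma Walk.preconnectedOn_support {u v : V} (p : T.Walk u v) :
    T.PreconnectedOn {y | y ∈ p.support} := fun _ hx _ hy =>
  (p.reachableWithin_support hx).symm.trans (p.reachableWithin_support hy)

lemma Connected.preconnectedOn_univ (h : T.Connected) : T.PreconnectedOn Set.univ :=
  fun u _ v _ => let ⟨p⟩ := h u v; ⟨p, fun _ _ => trivial⟩

section Components

variable {E' : Set V} {d : V}

lemma componentIn_subset : T.componentIn A c ⊆ A := fun _ h => h.mem_right

lemma mem_componentIn_self (h : c ∈ A) : c ∈ T.componentIn A c := .refl h

lemma ReachableWithin.componentIn {v : V} (h : T.ReachableWithin A c v) :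
    T.ReachableWithin (T.componentIn A c) c v := by
  classical
  obtain ⟨p, hp⟩ := h
  exact ⟨p, fun x hx =>
    ⟨p.takeUntil x hx, fun y hy => hp y (p.support_takeUntil_subset_support hx hy)⟩⟩

lemma preconnectedOn_componentIn : T.PreconnectedOn (T.componentIn A c) := fun _ hu _ hv =>
  (ReachableWithin.componentIn hu).symm.trans (ReachableWithin.componentIn hv)

lemma componentIn_eq_of_mem (h : d ∈ T.componentIn A c) : T.componentIn A d = T.componentIn A c :=
  Set.ext fun _ => ⟨fun hv => ReachableWithin.trans h hv, fun hv => h.symm.trans hv⟩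

lemma isComponentOf_componentIn (h : c ∈ A) : T.IsComponentOf A (T.componentIn A c) :=
  ⟨c, h, rfl⟩

namespace IsComponentOf

lemma subset (h : T.IsComponentOf A E) : E ⊆ A := by
  obtain ⟨c, -, rfl⟩ := h
  exact componentIn_subset

lemma preconnectedOn (h : T.IsComponentOf A E) : T.PreconnectedOn E := by
  obtain ⟨c, -, rfl⟩ := h
  exact preconnectedOn_componentIn

lemma eq_componentIn (h : T.IsComponentOf A E) (hd : d ∈ E) : E = T.componentIn A d := by
  obtain ⟨c, -, rfl⟩ := h
  exact (componentIn_eq_of_mem hd).symm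

lemma eq_of_mem (h : T.IsComponentOf A E) (h' : T.IsComponentOf A E') (hd : d ∈ E)
    (hd' : d ∈ E') : E = E' :=
  (h.eq_componentIn hd).trans (h'.eq_componentIn hd').symm

lemma mem_of_adj (h : T.IsComponentOf A E) {a b : V} (ha : a ∈ E) (hb : b ∈ A)
    (hab : T.Adj a b) : b ∈ E := by
  obtain ⟨c, -, rfl⟩ := h
  exact ReachableWithin.trans_adj ha hab hb

lemma subset_of_preconnectedOn (h : T.IsComponentOf A E) {F : Set V} (hF : T.PreconnectedOn F)
    (hFA : F ⊆ A) (hd : d ∈ E) (hdF : d ∈ F) : F ⊆ E := by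
  rw [h.eq_componentIn hd]
  exact fun x hx => (hF d hdF x hx).mono hFA

lemma exists_adj (h : T.IsComponentOf (S \ R) E) (hS : T.PreconnectedOn S) (hRS : R ⊆ S)
    (hR : R.Nonempty) : ∃ e ∈ E, ∃ r ∈ R, T.Adj r e := by
  obtain ⟨c, hc, rfl⟩ := h
  obtain ⟨r, hr⟩ := hR
  obtain ⟨p, hp⟩ := hS c hc.1 r (hRS hr)
  obtain ⟨d, hd, hd₁, hd₂⟩ := p.exists_boundary_dart _ (mem_componentIn_self hc)
    fun h => (componentIn_subset h).2 hr
  have hdS : d.snd ∈ S := hp _ (p.dart_snd_mem_support_of_mem_darts hd)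
  by_contra! hno
  exact hd₂ ((isComponentOf_componentIn hc).mem_of_adj hd₁
    ⟨hdS, fun hdR => hno _ hd₁ _ hdR d.adj.symm⟩ d.adj)

end IsComponentOf

end Components

/-! ### Path sets and contracted partitions -/

def IsPathSet (T : SimpleGraph V) (R : Set V) : Prop :=
  ∃ (u v : V) (p : T.Walk u v), p.IsPath ∧ R = {x | x ∈ p.support}

lemma Walk.IsPath.isPathSet {u v : V} {p : T.Walk u v} (hp : p.IsPath) :
    T.IsPathSet {x | x ∈ p.support} :=
  ⟨u, v, p, hp, rfl⟩

namespace IsPathSet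

lemma nonempty (h : T.IsPathSet R) : R.Nonempty := by
  obtain ⟨u, -, p, -, rfl⟩ := h
  exact ⟨u, p.start_mem_support⟩

lemma preconnectedOn (h : T.IsPathSet R) : T.PreconnectedOn R := by
  obtain ⟨-, -, p, -, rfl⟩ := h
  exact p.preconnectedOn_support

lemma exists_isPathSeq (h : T.IsPathSet R) :
    ∃ (m : ℕ) (f : ℕ → V), IsPathSeq T f m ∧ R = {v | ∃ i ≤ m, f i = v} := by
  obtain ⟨u, v, p, hp, rfl⟩ := h
  refine ⟨p.length, p.getVert, ⟨fun i j hi hj hij => hp.getVert_injOn hi hj hij,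
    fun i hi => p.adj_getVert_succ hi⟩, ?_⟩
  ext x
  simp only [Set.mem_ofPred_eq, Walk.mem_support_iff_exists_getVert]
  exact ⟨fun ⟨i, h, hi⟩ => ⟨i, hi, h⟩, fun ⟨i, hi, h⟩ => ⟨i, h, hi⟩⟩

end IsPathSet

def partGraph (T : SimpleGraph V) {ι : Type} (P : ι → Set V) : SimpleGraph ι where
  Adj x y := x ≠ y ∧ ∃ u ∈ P x, ∃ w ∈ P y, T.Adj u w
  symm := ⟨fun _ _ ⟨hxy, u, hu, w, hw, h⟩ => ⟨hxy.symm, w, hw, u, hu, h.symm⟩⟩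
  loopless := ⟨fun _ h => h.1 rfl⟩

section PartGraph

variable {ι : Type} {P : ι → Set V}

lemma partGraph_reachable_of_walk (hP : Pairwise (Disjoint on P)) (hcov : ∀ v ∈ S, ∃ x, v ∈ P x)
    {u v : V} (p : T.Walk u v) (hpS : ∀ z ∈ p.support, z ∈ S) {x y : ι} (hu : u ∈ P x)
    (hv : v ∈ P y) : (T.partGraph P).Reachable x y := by
  induction p generalizing x with
  | nil =>
    obtain rfl : x = y := by_contra fun hxy => Set.disjoint_left.mp (hP hxy) hu hv
    rfl
  | @cons a b _ hab q ih =>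
    obtain ⟨z, hz⟩ := hcov b (hpS b (by simp))
    have hzy := ih (fun t ht => hpS t (by simp [ht])) hz hv
    by_cases hxz : x = z
    · exact hxz ▸ hzy
    · exact Adj.reachable (G := T.partGraph P) ⟨hxz, a, hu, b, hz, hab⟩ |>.trans hzy

lemma reachable_of_reachable_of_parts {G : SimpleGraph V} {Q : SimpleGraph ι}
    (hPG : ∀ x, ∀ u ∈ P x, ∀ v ∈ P x, G.Reachable u v)
    (hQG : ∀ x y, Q.Adj x y → ∃ u ∈ P x, ∃ w ∈ P y, G.Adj u w) {x y : ι} (h : Q.Reachable x y) :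
    ∀ u ∈ P x, ∀ v ∈ P y, G.Reachable u v := by
  obtain ⟨q⟩ := h
  induction q with
  | nil => exact hPG _
  | cons hxy _ ih =>
    intro u hu v hv
    obtain ⟨a, ha, b, hb, hab⟩ := hQG _ _ hxy
    exact (hPG _ u hu a ha).trans (hab.reachable.trans (ih b hb v hv))

lemma partGraph_connected [Nonempty ι] (hS : T.PreconnectedOn S)
    (hP : Pairwise (Disjoint on P)) (hsub : ∀ x, P x ⊆ S) (hcov : ∀ v ∈ S, ∃ x, v ∈ P x)
    (hne : ∀ x, (P x).Nonempty) : (T.partGraph P).Connected := by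
  refine (connected_iff _).mpr ⟨fun x y => ?_, inferInstance⟩
  obtain ⟨u, hu⟩ := hne x
  obtain ⟨v, hv⟩ := hne y
  obtain ⟨p, hp⟩ := hS u (hsub x hu) v (hsub y hv)
  exact partGraph_reachable_of_walk hP hcov p hp hu hv

/-- An edge `xy` of the contracted graph comes from an edge `uw` of `T`, which is a bridge; a detour
from `x` to `y` avoiding `xy` would lift to one from `u` to `w` avoiding `uw`. -/
lemma partGraph_isAcyclic (hT : T.IsAcyclic) (hP : Pairwise (Disjoint on P))
    (hconn : ∀ x, T.PreconnectedOn (P x)) : (T.partGraph P).IsAcyclic := by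
  refine isAcyclic_iff_forall_adj_isBridge.mpr fun x y ⟨hxy, u, hu, w, hw, huw⟩ => ?_
  have hbridge := isAcyclic_iff_forall_adj_isBridge.mp hT huw
  rw [isBridge_iff] at hbridge ⊢
  refine fun hreach => hbridge <| reachable_of_reachable_of_parts (fun z a ha b hb => ?_)
    (fun z z' hzz' => ?_) hreach u hu w hw
  · obtain ⟨p, hp⟩ := hconn z a ha b hb
    refine (reachable_deleteEdges_iff_exists_walk).mpr ⟨p, fun he => hxy ?_⟩
    have hu' := hp _ (p.fst_mem_support_of_mem_edges he)
    have hw' := hp _ (p.snd_mem_support_of_mem_edges he)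
    by_contra hne
    rcases eq_or_ne z x with rfl | hzx
    · exact Set.disjoint_left.mp (hP (Ne.symm hne)) hw hw'
    · exact Set.disjoint_left.mp (hP hzx) hu' hu
  · obtain ⟨⟨hne, a, ha, b, hb, hab⟩, hzx⟩ := (deleteEdges_adj ..).mp hzz'
    refine ⟨a, ha, b, hb, (deleteEdges_adj ..).mpr ⟨hab, fun he => hzx ?_⟩⟩
    have mem_eq : ∀ {v s t}, v ∈ P s → v ∈ P t → s = t := fun hs ht =>
      by_contra fun hst => Set.disjoint_left.mp (hP hst) hs ht
    rcases Sym2.eq_iff.mp (Set.mem_singleton_iff.mp he) with ⟨rfl, rfl⟩ | ⟨rfl, rfl⟩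
    · rw [mem_eq ha hu, mem_eq hb hw]
      rfl
    · rw [mem_eq ha hw, mem_eq hb hu]
      exact Sym2.eq_swap

end PartGraph

/-! ### Path-partitions of a vertex set -/

/-- The contracted tree is not recorded: it is `T.partGraph P`, which is a tree when `T` is one
(`PathPartitionOn.isTree`). -/
structure PathPartitionOn (T : SimpleGraph V) (S : Set V) (ι : Type) where
  P : ι → Set V
  root : ι
  disjoint : Pairwise (Disjoint on P)
  subset : ∀ x, P x ⊆ S
  cover : ∀ v ∈ S, ∃ x, v ∈ P x
  isPathSet : ∀ x, T.IsPathSet (P x)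

def HasPathPartitionOn (T : SimpleGraph V) (S : Set V) (c : V) (H : ℕ) : Prop :=
  ∃ (ι : Type) (Q : PathPartitionOn T S ι),
    c ∈ Q.P Q.root ∧ ∀ x, (T.partGraph Q.P).dist Q.root x ≤ H

lemma PathPartitionOn.isTree {ι : Type} (Q : PathPartitionOn T S ι) (hT : T.IsTree)
    (hS : T.PreconnectedOn S) : (T.partGraph Q.P).IsTree :=
  have : Nonempty ι := ⟨Q.root⟩
  ⟨partGraph_connected hS Q.disjoint Q.subset Q.cover fun x => (Q.isPathSet x).nonempty,
    partGraph_isAcyclic hT.isAcyclic Q.disjoint fun x => (Q.isPathSet x).preconnectedOn⟩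

lemma HasPathPartitionOn.mono {H' : ℕ} (h : T.HasPathPartitionOn S c H) (hH : H ≤ H') :
    T.HasPathPartitionOn S c H' :=
  let ⟨ι, Q, hc, hQ⟩ := h
  ⟨ι, Q, hc, fun x => (hQ x).trans hH⟩

lemma hasPathPartitionOn_of_isPathSet (hS : T.IsPathSet S) (hc : c ∈ S) :
    T.HasPathPartitionOn S c 0 :=
  ⟨Unit, ⟨fun _ => S, (), fun _ _ h => absurd rfl h, fun _ => subset_rfl,
    fun _ hv => ⟨(), hv⟩, fun _ => hS⟩, hc, fun _ => (dist_self ..).le⟩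

section Glue

variable {ι : {E // T.IsComponentOf (S \ R) E} → Type}
  (Q : ∀ E, PathPartitionOn T E.1 (ι E))

def gluedParts (R : Set V) : Option (Σ E, ι E) → Set V :=
  fun x => x.elim R fun y => (Q y.1).P y.2

lemma pairwise_disjoint_gluedParts : Pairwise (Disjoint on gluedParts Q R) := by
  have hR : ∀ E (i : ι E), Disjoint R ((Q E).P i) := fun E i =>
    Set.disjoint_left.mpr fun v hv hv' => (E.2.subset ((Q E).subset i hv')).2 hv
  rintro (_ | ⟨E, i⟩) (_ | ⟨E', j⟩) hxy
  · exact absurd rfl hxy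
  · exact hR E' j
  · exact (hR E i).symm
  · by_cases hEE : E = E'
    · subst hEE
      exact (Q E).disjoint (i := i) (j := j) fun hij => hxy (by subst hij; rfl)
    · refine Set.disjoint_left.mpr fun v hv hv' => hEE (Subtype.ext ?_)
      exact E.2.eq_of_mem E'.2 ((Q E).subset i hv) ((Q E').subset j hv')

def PathPartitionOn.glue (hR : T.IsPathSet R) (hRS : R ⊆ S) :
    PathPartitionOn T S (Option (Σ E, ι E)) where
  P := gluedParts Q R
  root := none
  disjoint := pairwise_disjoint_gluedParts Q
  subset
    | none => hRS
    | some ⟨E, i⟩ => fun _ hv => (E.2.subset ((Q E).subset i hv)).1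
  cover v hv := by
    by_cases hvR : v ∈ R
    · exact ⟨none, hvR⟩
    · let E : {E // T.IsComponentOf (S \ R) E} := ⟨_, isComponentOf_componentIn ⟨hv, hvR⟩⟩
      obtain ⟨i, hi⟩ := (Q E).cover v (mem_componentIn_self ⟨hv, hvR⟩)
      exact ⟨some ⟨E, i⟩, hi⟩
  isPathSet
    | none => hR
    | some ⟨E, i⟩ => (Q E).isPathSet i

lemma dist_glue_le (E) (i : ι E) {r e : V} (hr : r ∈ R)
    (he : e ∈ (Q E).P (Q E).root) (hre : T.Adj r e) :
    (T.partGraph (gluedParts Q R)).dist none (some ⟨E, i⟩) ≤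
      (T.partGraph (Q E).P).dist (Q E).root i + 1 := by
  have : Nonempty (ι E) := ⟨(Q E).root⟩
  have hconn := partGraph_connected (T := T) (E.2.preconnectedOn) (Q E).disjoint (Q E).subset
    (Q E).cover fun x => ((Q E).isPathSet x).nonempty
  obtain ⟨w, hw⟩ := (hconn (Q E).root i).exists_walk_length_eq_dist
  let g : T.partGraph (Q E).P →g T.partGraph (gluedParts Q R) :=
    ⟨fun j => some ⟨E, j⟩, fun ⟨hjk, huv⟩ => ⟨fun h => hjk (by cases h; rfl), huv⟩⟩
  have hroot : (T.partGraph (gluedParts Q R)).Adj none (some ⟨E, (Q E).root⟩) :=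
    ⟨(Option.some_ne_none _).symm, r, hr, e, he, hre⟩
  calc _ ≤ (Walk.cons hroot (w.map g)).length := dist_le _
    _ = _ := by simp [hw]

end Glue

theorem hasPathPartitionOn_of_components (hR : T.IsPathSet R) (hRS : R ⊆ S) (hc : c ∈ R)
    (hcomp : ∀ E, T.IsComponentOf (S \ R) E →
      ∃ e, T.HasPathPartitionOn E e H ∧ ∃ r ∈ R, T.Adj r e) :
    T.HasPathPartitionOn S c (H + 1) := by
  have hcomp' : ∀ E : {E // T.IsComponentOf (S \ R) E},
      ∃ e, T.HasPathPartitionOn E e H ∧ ∃ r ∈ R, T.Adj r e := fun E => hcomp E.1 E.2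
  choose e hpp r hr hre using hcomp'
  unfold HasPathPartitionOn at hpp
  choose ι Q hroot hheight using hpp
  refine ⟨_, PathPartitionOn.glue Q hR hRS, hc, ?_⟩
  rintro (_ | ⟨E, i⟩)
  · exact (dist_self ..).le.trans (Nat.zero_le _)
  · exact (dist_glue_le Q E i (hr E) (hroot E) (hre E)).trans (Nat.add_le_add_right (hheight E i) 1)

theorem hasPathPartitionOn_of_root (hS : T.PreconnectedOn S) (hR : T.IsPathSet R) (hRS : R ⊆ S)
    (hc : c ∈ R) (hrec : ∀ E ⊆ S \ R, T.PreconnectedOn E → ∀ e ∈ E, T.HasPathPartitionOn E e H) :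
    T.HasPathPartitionOn S c (H + 1) :=
  hasPathPartitionOn_of_components hR hRS hc fun E hE =>
    let ⟨e, he, r, hr, hre⟩ := hE.exists_adj hS hRS hR.nonempty
    ⟨e, hrec E hE.subset hE.preconnectedOn e he, r, hr, hre⟩

namespace Walk

variable {u v w : V}

lemma IsPath.append {p : T.Walk u v} {q : T.Walk v w} (hp : p.IsPath) (hq : q.IsPath)
    (hpq : ∀ x ∈ p.support, x ∈ q.support → x = v) : (p.append q).IsPath := by
  rw [isPath_def, support_append]
  refine hp.support_nodup.append hq.support_nodup.tail fun x hxp hxq => ?_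
  have hvq : v ∉ q.support.tail := (List.nodup_cons.mp (q.cons_tail_support ▸ hq.support_nodup)).1
  exact hvq (hpq x hxp (List.mem_of_mem_tail hxq) ▸ hxq)

lemma IsPath.append_cons {a r : V} {q : T.Walk u a} {p : T.Walk r w} (hq : q.IsPath)
    (hp : p.IsPath) (har : T.Adj a r) (hqp : ∀ x ∈ q.support, x ∉ p.support) :
    (q.append (cons har p)).IsPath := by
  refine hq.append ((cons_isPath_iff _ _).mpr ⟨hp, hqp a q.end_mem_support⟩) fun x hx hx' => ?_
  rcases List.mem_cons.mp hx' with rfl | hx'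
  exacts [rfl, absurd hx' (hqp x hx)]

lemma IsPath.exists_support_eq_cons {p : T.Walk u v} (hp : p.IsPath) (hnil : ¬p.Nil) :
    ∃ (v' : V) (t : T.Walk v' u), t.IsPath ∧ T.Adj v v' ∧ v ∉ t.support ∧
      ∀ x, x ∈ p.support ↔ x = v ∨ x ∈ t.support := by
  obtain ⟨v', hvv', t, ht⟩ := not_nil_iff.mp (mt nil_reverse.mp hnil)
  have htp : (cons hvv' t).IsPath := ht ▸ hp.reverse
  refine ⟨v', t, htp.of_cons, hvv', ((cons_isPath_iff _ _).mp htp).2, fun x => ?_⟩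
  rw [← List.mem_reverse, ← support_reverse, ht, support_cons, List.mem_cons]

end Walk

lemma exists_isPath_to_adj_of_notMem (hS : T.PreconnectedOn S) (hRS : R ⊆ S) (hR : R.Nonempty)
    (hc : c ∈ S) (hcR : c ∉ R) : ∃ (a r : V) (q : T.Walk c a), q.IsPath ∧
      (∀ x ∈ q.support, x ∈ S \ R) ∧ r ∈ R ∧ T.Adj r a := by
  classical
  have hcA : c ∈ S \ R := ⟨hc, hcR⟩
  obtain ⟨a, ha, r, hr, hra⟩ := (isComponentOf_componentIn hcA).exists_adj hS hRS hR
  obtain ⟨q, hq⟩ := preconnectedOn_componentIn c (mem_componentIn_self hcA) a ha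
  exact ⟨a, r, q.bypass, q.bypass_isPath,
    fun x hx => componentIn_subset (hq x (q.support_bypass_subset_support hx)), hr, hra⟩

/-- The new path walks from `c` to `p` outside `p` and then follows `p` to its end; `t` is the
part of `p` before the junction. -/
lemma exists_reroute (hS : T.PreconnectedOn S) {u w : V} {p : T.Walk u w} (hp : p.IsPath)
    (hpS : {x | x ∈ p.support} ⊆ S) (hc : c ∈ S) (hcp : c ∉ p.support) :
    ∃ R, T.IsPathSet R ∧ R ⊆ S ∧ c ∈ R ∧ ({x | x ∈ p.support} ⊆ R ∨
      ∃ t, T.IsPathSet t ∧ t ⊆ S \ R ∧ {x | x ∈ p.support} ⊆ R ∪ t ∧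
        ∃ r ∈ R, ∃ r' ∈ t, T.Adj r r') := by
  obtain ⟨a, r, q, hq, hqS, hr, hra⟩ :=
    exists_isPath_to_adj_of_notMem hS hpS ⟨u, p.start_mem_support⟩ hc hcp
  obtain ⟨p₁, p₂, hp₁, hp₂, rfl⟩ := hp.mem_support_iff_exists_append.mp hr
  have hmemp : ∀ x, x ∈ (p₁.append p₂).support ↔ x ∈ p₁.support ∨ x ∈ p₂.support :=
    fun x => Walk.mem_support_append_iff _ _
  have hp₁₂ : ∀ x ∈ p₁.support, x ∈ p₂.support → x = r := fun x h₁ h₂ =>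
    by_contra fun hxr => hp.ne_of_mem_support_of_append hxr h₁ h₂ rfl
  have hR := hq.append_cons hp₂ hra.symm fun x hx hx' => (hqS x hx).2 ((hmemp x).mpr (.inr hx'))
  have hmemR : ∀ x, x ∈ (q.append (.cons hra.symm p₂)).support ↔
      x ∈ q.support ∨ x ∈ p₂.support := fun x => by
    simp only [Walk.mem_support_append_iff, Walk.support_cons, List.mem_cons]
    exact ⟨by rintro (h | rfl | h) <;> simp_all, by rintro (h | h) <;> simp_all⟩
  have hrR := (hmemR r).mpr (.inr p₂.start_mem_support)
  refine ⟨_, hR.isPathSet, fun x hx => ?_, Walk.start_mem_support _, ?_⟩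
  · rcases (hmemR x).mp hx with hx | hx
    exacts [(hqS x hx).1, hpS ((hmemp x).mpr (.inr hx))]
  by_cases hnil : p₁.Nil
  · refine .inl fun x hx => (hmemR x).mpr (.inr ?_)
    rcases (hmemp x).mp hx with hx | hx
    · rw [Walk.nil_iff_support_eq.mp hnil, List.mem_singleton] at hx
      exact hx ▸ hnil.eq ▸ p₂.start_mem_support
    · exact hx
  obtain ⟨r', t, ht, hrr', hrt, hmem₁⟩ := hp₁.exists_support_eq_cons hnil
  have htp : ∀ x ∈ t.support, x ∈ (p₁.append p₂).support := fun x hx =>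
    (hmemp x).mpr (.inl ((hmem₁ x).mpr (.inr hx)))
  refine .inr ⟨_, ht.isPathSet, fun x hx => ⟨hpS (htp x hx), fun hxR => ?_⟩,
    fun x hx => ?_, r, hrR, r', t.start_mem_support, hrr'⟩
  · rcases (hmemR x).mp hxR with hxq | hx₂
    · exact (hqS x hxq).2 (htp x hx)
    · exact hrt (hp₁₂ x ((hmem₁ x).mpr (.inr hx)) hx₂ ▸ hx)
  · rcases (hmemp x).mp hx with hx | hx
    · rcases (hmem₁ x).mp hx with rfl | hxt
      exacts [.inl hrR, .inr hxt]
    · exact .inl ((hmemR x).mpr (.inr hx))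

theorem hasPathPartitionOn_add_two (hS : T.PreconnectedOn S) (hR : T.IsPathSet R) (hRS : R ⊆ S)
    (hrec : ∀ E ⊆ S \ R, T.PreconnectedOn E → ∀ e ∈ E, T.HasPathPartitionOn E e H) (hc : c ∈ S) :
    T.HasPathPartitionOn S c (H + 2) := by
  by_cases hcR : c ∈ R
  · exact (hasPathPartitionOn_of_root hS hR hRS hcR hrec).mono (by omega)
  obtain ⟨u, w, p, hp, rfl⟩ := hR
  obtain ⟨R', hR', hR'S, hcR', hpR' | ⟨t, ht, htS, hpt, r, hr, r', hr', hrr'⟩⟩ :=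
    exists_reroute hS hp hRS hc hcR
  · refine (hasPathPartitionOn_of_root hS hR' hR'S hcR' fun E hE => hrec E ?_).mono (by omega)
    exact hE.trans (Set.sdiff_subset_sdiff_right hpR')
  set D := T.componentIn (S \ R') r'
  have hD : T.IsComponentOf (S \ R') D := isComponentOf_componentIn (htS hr')
  have htD : t ⊆ D :=
    hD.subset_of_preconnectedOn ht.preconnectedOn htS (mem_componentIn_self (htS hr')) hr'
  refine hasPathPartitionOn_of_components hR' hR'S hcR' fun E hE => ?_
  by_cases hED : E = D
  · refine hED ▸ ⟨r', hasPathPartitionOn_of_root hD.preconnectedOn ht htD hr' fun E' hE' =>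
      hrec E' fun x hx => ?_, r, hr, hrr'⟩
    obtain ⟨hxD, hxt⟩ := hE' hx
    exact ⟨(hD.subset hxD).1, fun hxp => (hpt hxp).elim (hD.subset hxD).2 hxt⟩
  · obtain ⟨e, he, r'', hr'', hre⟩ := hE.exists_adj hS hR'S hR'.nonempty
    refine ⟨e, (hrec E (fun x hx => ⟨(hE.subset hx).1, fun hxp => hED ?_⟩) hE.preconnectedOn e
      he).mono (by omega), r'', hr'', hre⟩
    exact hE.eq_of_mem hD hx (htD (((hpt hxp).resolve_left (hE.subset hx).2)))

/-! ### Path decompositions -/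

structure IsPathDecompOn (T : SimpleGraph V) (S : Set V) {m : ℕ} (B : Fin m → Finset V) :
    Prop where
  cover : ∀ v ∈ S, ∃ i, v ∈ B i
  interval : ∀ v i j k, i ≤ j → j ≤ k → v ∈ B i → v ∈ B k → v ∈ B j
  adj : ∀ u v, u ∈ S → v ∈ S → T.Adj u v → ∃ i, u ∈ B i ∧ v ∈ B i
  subset : ∀ i, ∀ v ∈ B i, v ∈ S

namespace IsPathDecompOn

variable {m : ℕ} {B : Fin m → Finset V}

lemma restrict (hB : T.IsPathDecompOn S B) [DecidablePred (· ∈ E)] (hE : E ⊆ S) :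
    T.IsPathDecompOn E fun i => (B i).filter (· ∈ E) where
  cover v hv := let ⟨i, hi⟩ := hB.cover v (hE hv); ⟨i, Finset.mem_filter.mpr ⟨hi, hv⟩⟩
  interval v i j k hij hjk hvi hvk := by
    simp only [Finset.mem_filter] at hvi hvk ⊢
    exact ⟨hB.interval v i j k hij hjk hvi.1 hvk.1, hvi.2⟩
  adj u v hu hv huv := by
    obtain ⟨i, hui, hvi⟩ := hB.adj u v (hE hu) (hE hv) huv
    exact ⟨i, Finset.mem_filter.mpr ⟨hui, hu⟩, Finset.mem_filter.mpr ⟨hvi, hv⟩⟩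
  subset _ _ hv := (Finset.mem_filter.mp hv).2

lemma exists_mem_support_of_walk (hB : T.IsPathDecompOn S B) {u w : V} (p : T.Walk u w)
    (hpS : ∀ x ∈ p.support, x ∈ S) {i₀ i i₁ : Fin m} (hu : u ∈ B i₀) (hw : w ∈ B i₁)
    (h₀ : i₀ ≤ i) (h₁ : i ≤ i₁) : ∃ x ∈ p.support, x ∈ B i := by
  induction p generalizing i₀ with
  | nil => exact ⟨_, Walk.start_mem_support _, hB.interval _ _ _ _ h₀ h₁ hu hw⟩
  | cons hab q ih =>
    obtain ⟨j, haj, hbj⟩ := hB.adj _ _ (hpS _ (by simp)) (hpS _ (by simp)) hab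
    rcases le_total j i with hji | hij
    · obtain ⟨x, hx, hxi⟩ := ih (fun x hx => hpS x (by simp [hx])) hbj hw hji
      exact ⟨x, by simp [hx], hxi⟩
    · exact ⟨_, by simp, hB.interval _ _ _ _ h₀ hij hu haj⟩

lemma exists_isPathSet_meeting_all_bags (hB : T.IsPathDecompOn S B) (hS : T.PreconnectedOn S)
    (hne : S.Nonempty) :
    ∃ R, T.IsPathSet R ∧ R ⊆ S ∧ ∀ i, (B i).Nonempty → ∃ x ∈ R, x ∈ B i := by
  classical
  obtain ⟨c, hc⟩ := hne
  obtain ⟨ic, hic⟩ := hB.cover c hc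
  let I := Finset.univ.filter fun i => (B i).Nonempty
  have hI : I.Nonempty := ⟨ic, Finset.mem_filter.mpr ⟨Finset.mem_univ _, c, hic⟩⟩
  obtain ⟨u, hu⟩ := (Finset.mem_filter.mp (I.min'_mem hI)).2
  obtain ⟨w, hw⟩ := (Finset.mem_filter.mp (I.max'_mem hI)).2
  obtain ⟨p, hp⟩ := hS u (hB.subset _ u hu) w (hB.subset _ w hw)
  have hpS : ∀ x ∈ p.bypass.support, x ∈ S := fun x hx =>
    hp x (p.support_bypass_subset_support hx)
  refine ⟨_, p.bypass_isPath.isPathSet, hpS, fun i hi => ?_⟩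
  have hiI : i ∈ I := Finset.mem_filter.mpr ⟨Finset.mem_univ _, hi⟩
  exact hB.exists_mem_support_of_walk _ hpS hu hw (I.min'_le i hiI) (I.le_max' i hiI)

end IsPathDecompOn

theorem hasPathPartitionOn_of_isPathDecompOn {k m : ℕ} {B : Fin m → Finset V}
    (hS : T.PreconnectedOn S) (hB : T.IsPathDecompOn S B) (hk : ∀ i, (B i).card ≤ k + 1)
    (hc : c ∈ S) : T.HasPathPartitionOn S c (2 * k) := by
  classical
  induction k generalizing S m B c with
  | zero =>
    obtain ⟨R, hR, hRS, hhit⟩ := hB.exists_isPathSet_meeting_all_bags hS ⟨c, hc⟩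
    have hSR : S ⊆ R := fun v hv => by_contra fun hvR => by
      obtain ⟨i, hi⟩ := hB.cover v hv
      have hv' : v ∈ (B i).filter (fun x : V => x ∈ S \ R) := Finset.mem_filter.mpr ⟨hi, hv, hvR⟩
      have := Finset.card_filter_le_of_exists_mem (E := S \ R) (hk i) Set.disjoint_sdiff_left
        (hhit i)
      exact (Finset.card_pos.mpr ⟨v, hv'⟩).ne' (by omega)
    exact hasPathPartitionOn_of_isPathSet (hRS.antisymm hSR ▸ hR) hc
  | succ k ih =>
    obtain ⟨R, hR, hRS, hhit⟩ := hB.exists_isPathSet_meeting_all_bags hS ⟨c, hc⟩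
    refine hasPathPartitionOn_add_two hS hR hRS (fun E hE hEc e he => ?_) hc
    exact ih hEc (hB.restrict (hE.trans Set.sdiff_subset)) (fun i =>
      Finset.card_filter_le_of_exists_mem (hk i) (Set.disjoint_sdiff_left.mono_left hE) (hhit i)) he

def PathPartitionOn.toPathPartition {ι : Type} (Q : T.PathPartitionOn Set.univ ι)
    (hQ : (T.partGraph Q.P).IsTree) : PathPartition T ι where
  Q := T.partGraph Q.P
  root := Q.root
  isTree := hQ
  P := Q.P
  disjoint _ _ := (Q.disjoint ·)
  cover v := Q.cover v trivial
  isPath x := (Q.isPathSet x).exists_isPathSeq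
  adj_iff _ _ := Iff.rfl

end SimpleGraph

lemma pathwidthLE_card {V : Type} [Fintype V] (G : SimpleGraph V) :
    PathwidthLE G (Fintype.card V) :=
  ⟨1, fun _ => Finset.univ, ⟨fun v => ⟨0, Finset.mem_univ v⟩,
    fun v _ _ _ _ _ _ _ => Finset.mem_univ v,
    fun u v _ => ⟨0, Finset.mem_univ u, Finset.mem_univ v⟩⟩,
    fun _ => by simp⟩

lemma IsPathDecomp.isPathDecompOn_univ {V : Type} {G : SimpleGraph V} {m : ℕ}
    {B : Fin m → Finset V} (h : IsPathDecomp G B) : G.IsPathDecompOn Set.univ B :=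
  ⟨fun v _ => h.1 v, h.2.1, fun u v _ _ => h.2.2 u v, fun _ _ _ => trivial⟩

lemma pathwidthLE_pathwidth {V : Type} [Finite V] (G : SimpleGraph V) :
    PathwidthLE G (pathwidth G) :=
  have := Fintype.ofFinite V
  Nat.sInf_mem (s := {k | PathwidthLE G k}) ⟨_, pathwidthLE_card G⟩


/-- Every finite tree of pathwidth `k` has a path-partition of height at most `2k`
(every vertex of the indexing rooted tree is at distance at most `2k` from the root). -/
theorem stmt5 {V : Type} (hV : Finite V) (T : SimpleGraph V) (hT : T.IsTree)
    (k : ℕ) (hpw : pathwidth T = k) :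
    ∃ (ι : Type) (PP : PathPartition T ι),
      ∀ x : ι, PP.Q.dist PP.root x ≤ 2 * k := by
  obtain ⟨m, B, hB, hk⟩ := hpw ▸ pathwidthLE_pathwidth T
  have hconn := hT.connected.preconnectedOn_univ
  obtain ⟨c⟩ := hT.connected.nonempty
  obtain ⟨ι, Q, -, hQ⟩ := SimpleGraph.hasPathPartitionOn_of_isPathDecompOn hconn
    hB.isPathDecompOn_univ hk (Set.mem_univ c)
  exact ⟨ι, Q.toPathPartition (Q.isTree hT hconn), hQ⟩
end

section
/- Let T be a finite tree with a path-partition (𝒯, 𝒫), and let φ be a vertex coloring of T such that (i) every ascending path of T is φ-good and (ii) for every vertex v and every guard w ∈ G(v) of v, φ(v) ≠ φ(w). Then φ is a nonrepetitive coloring of T. -/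
/-- `w` is a guard of `v`: on the shortest path `q 0 = v, q 1, …, q p` in `T` from `v`
to the root-path (the path meeting the root-path only in its last vertex), `w = q i`
for some `i ≥ 1` such that the edge `q (i-1) q i` is vertical (its endpoints lie in
different paths of the path-partition). -/
def PathPartition.IsGuard {V ι : Type} {T : SimpleGraph V}
    (PP : PathPartition T ι) (v w : V) : Prop :=
  ∃ (p : ℕ) (q : ℕ → V), q 0 = v ∧ IsPathSeq T q p ∧
    q p ∈ PP.P PP.root ∧ (∀ i < p, q i ∉ PP.P PP.root) ∧
    ∃ i, 1 ≤ i ∧ i ≤ p ∧ q i = w ∧ ¬ ∃ x, q (i - 1) ∈ PP.P x ∧ q i ∈ PP.P x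

lemma fwd_aux {V ι : Type} {T : SimpleGraph V} (PP : PathPartition T ι) (φ : V → ℕ)
    (hgood : PP.AscGood φ) (r : ℕ) (hr : 1 ≤ r) (p : ℕ → V)
    (hp : IsPathSeq T p (2 * r - 1)) (hrep : ∀ i < r, φ (p i) = φ (p (i + r)))
    (L : ℕ) (hLmin : ∀ i ≤ 2 * r - 1, L ≤ PP.level (p i))
    (a b : ℕ) (ha : a < r) (hpaL : PP.level (p a) = L)
    (hb : ∀ j ≤ 2 * r - 1, PP.level (p j) = L → j ≤ b) :
    2 * r ≤ a + b := by
  set m := 2 * r - 1 - a with hm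
  set f : ℕ → V := fun i => p (a + i) with hf
  have hfps : IsPathSeq T f m := by
    constructor
    · intro i j hi hj hij
      have := hp.1 (a + i) (a + j) (by omega) (by omega) hij
      omega
    · intro i hi
      exact hp.2 (a + i) (by omega)
  have hminL : PP.minLevel f m = L := by
    have h1 : PP.minLevel f m ≤ L := by
      apply Nat.sInf_le
      exact ⟨0, Nat.zero_le m, hpaL⟩
    have h2 : L ≤ PP.minLevel f m := by
      have hne : {l | ∃ i ≤ m, PP.level (f i) = l}.Nonempty :=
        ⟨PP.level (f 0), 0, Nat.zero_le m, rfl⟩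
      obtain ⟨i, hi, hil⟩ := Nat.sInf_mem hne
      rw [PathPartition.minLevel, ← hil]
      exact hLmin (a + i) (by omega)
    omega
  have hkey := hgood m f hfps (by rw [hminL]; exact hpaL) (r - a) a
    (by omega) (by omega)
    (by
      intro i hi
      show φ (p (a + i)) = φ (p (a + (r - a + a + i)))
      have e2 : a + (r - a + a + i) = (a + i) + r := by omega
      rw [e2]
      exact hrep (a + i) (by omega))
  rw [hminL] at hkey
  have hsub : {i : ℕ | r - a ≤ i ∧ i < r - a + a ∧ PP.level (f i) = L} ⊆
      ↑(Finset.Ico (r - a) (b + 1 - a)) := by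
    intro i hi
    obtain ⟨h1, h2, h3⟩ := hi
    have hab : a + i ≤ b := hb (a + i) (by omega) h3
    simp only [Finset.coe_Ico, Set.mem_Ico]
    omega
  have hcard := Set.ncard_le_ncard hsub (Finset.finite_toSet _)
  rw [Set.ncard_coe_finset, Nat.card_Ico] at hcard
  omega

/-- If `T` is a finite tree with a path-partition such that (i) every ascending path is
`φ`-good and (ii) `φ` gives every vertex a color different from all its guards, then
`φ` is a nonrepetitive coloring of `T`. -/
theorem stmt10 {V ι : Type} (hV : Finite V) (T : SimpleGraph V) (hT : T.IsTree)
    (PP : PathPartition T ι) (φ : V → ℕ)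
    (hgood : PP.AscGood φ)
    (hguard : ∀ v w, PP.IsGuard v w → φ v ≠ φ w) :
    Nonrepetitive T φ := by
  intro r hr p hp
  by_contra hcon
  push_neg at hcon
  set L := sInf {l | ∃ i ≤ 2 * r - 1, PP.level (p i) = l} with hL
  have hLmin : ∀ i ≤ 2 * r - 1, L ≤ PP.level (p i) := fun i hi => Nat.sInf_le ⟨i, hi, rfl⟩
  have hne : ({l | ∃ i ≤ 2 * r - 1, PP.level (p i) = l}).Nonempty :=
    ⟨PP.level (p 0), 0, by omega, rfl⟩
  obtain ⟨i₀, hi₀, hi₀L⟩ := Nat.sInf_mem hne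
  set F := (Finset.range (2 * r)).filter (fun i => PP.level (p i) = L) with hF
  have hFne : F.Nonempty := by
    refine ⟨i₀, ?_⟩
    simp only [hF, Finset.mem_filter, Finset.mem_range]
    exact ⟨by omega, hi₀L⟩
  set a := F.min' hFne with haDef
  set b := F.max' hFne with hbDef
  have haF : a ∈ F := F.min'_mem hFne
  have hbF : b ∈ F := F.max'_mem hFne
  simp only [hF, Finset.mem_filter, Finset.mem_range] at haF hbF
  have hab : a ≤ b := by
    apply F.min'_le
    simp only [hF, Finset.mem_filter, Finset.mem_range]
    exact hbF
  have hbmax : ∀ j ≤ 2 * r - 1, PP.level (p j) = L → j ≤ b := by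
    intro j hj hjL
    apply F.le_max'
    simp only [hF, Finset.mem_filter, Finset.mem_range]
    exact ⟨by omega, hjL⟩
  have hamin : ∀ j ≤ 2 * r - 1, PP.level (p j) = L → a ≤ j := by
    intro j hj hjL
    apply F.min'_le
    simp only [hF, Finset.mem_filter, Finset.mem_range]
    exact ⟨by omega, hjL⟩
  -- reversed path
  set q : ℕ → V := fun i => p (2 * r - 1 - i) with hq
  have hqps : IsPathSeq T q (2 * r - 1) := by
    constructor
    · intro i j hi hj hij
      have := hp.1 (2 * r - 1 - i) (2 * r - 1 - j) (by omega) (by omega) hij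
      omega
    · intro i hi
      have h2 := hp.2 (2 * r - 1 - (i + 1)) (by omega)
      have e : 2 * r - 1 - (i + 1) + 1 = 2 * r - 1 - i := by omega
      rw [e] at h2
      exact h2.symm
  have hqrep : ∀ i < r, φ (q i) = φ (q (i + r)) := by
    intro i hi
    show φ (p (2 * r - 1 - i)) = φ (p (2 * r - 1 - (i + r)))
    have e1 : 2 * r - 1 - i = (r - 1 - i) + r := by omega
    have e2 : 2 * r - 1 - (i + r) = r - 1 - i := by omega
    rw [e1, e2]
    exact (hcon (r - 1 - i) (by omega)).symm
  have hqLmin : ∀ i ≤ 2 * r - 1, L ≤ PP.level (q i) := fun i hi => hLmin _ (by omega)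
  have hqb : ∀ j ≤ 2 * r - 1, PP.level (q j) = L → j ≤ 2 * r - 1 - a := by
    intro j hj hjL
    have := hamin (2 * r - 1 - j) (by omega) hjL
    omega
  have hqaL : PP.level (q (2 * r - 1 - b)) = L := by
    show PP.level (p (2 * r - 1 - (2 * r - 1 - b))) = L
    have e : 2 * r - 1 - (2 * r - 1 - b) = b := by omega
    rw [e]
    exact hbF.2
  by_cases hcase : a < r
  · have h1 := fwd_aux PP φ hgood r hr p hp hcon L hLmin a b hcase haF.2 hbmax
    have hblt : 2 * r - 1 - b < r := by omega
    have h2 := fwd_aux PP φ hgood r hr q hqps hqrep L hqLmin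
      (2 * r - 1 - b) (2 * r - 1 - a) hblt hqaL hqb
    omega
  · have hblt : 2 * r - 1 - b < r := by omega
    have h2 := fwd_aux PP φ hgood r hr q hqps hqrep L hqLmin
      (2 * r - 1 - b) (2 * r - 1 - a) hblt hqaL hqb
    omega
end

section
/- Let T be a finite tree with a path-partition (𝒯, 𝒫) of height h, and suppose each vertex v of T is assigned a color list S_v of size at least h + 1 such that for every coloring φ of T with φ(v) ∈ S_v for all v, every ascending path of T is φ-good. Then there exists a nonrepetitive coloring φ of T with φ(v) ∈ S_v for every vertex v. -/
/-- Let `T` be a finite tree with a path-partition of height `h`, and suppose each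
vertex `v` has a color list `S v` of size at least `h + 1` such that every coloring
from these lists makes all ascending paths good.  Then there is a nonrepetitive
coloring of `T` from these lists. -/
theorem stmt11 {V ι : Type} (hV : Finite V) [Fintype ι]
    (T : SimpleGraph V) (hT : T.IsTree) (PP : PathPartition T ι) (h : ℕ)
    (hh : (Finset.univ.sup fun x : ι => PP.Q.dist PP.root x) = h)
    (S : V → Finset ℕ) (hcard : ∀ v, h + 1 ≤ (S v).card)
    (hgood : ∀ φ : V → ℕ, (∀ v, φ v ∈ S v) → PP.AscGood φ) :
    ∃ φ : V → ℕ, (∀ v, φ v ∈ S v) ∧ Nonrepetitive T φ := by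
  classical
  have hne : ∀ v, ∃ c, c ∈ S v := fun v =>
    Finset.card_pos.mp (lt_of_lt_of_le (Nat.succ_pos h) (hcard v))
  choose φ hφ using hne
  refine ⟨φ, hφ, ?_⟩
  have hG := hgood φ hφ
  intro r hr p hp
  by_contra hcon
  push_neg at hcon
  set m : ℕ := 2 * r - 1 with hm
  have hSne : {l | ∃ i ≤ m, PP.level (p i) = l}.Nonempty :=
    ⟨PP.level (p 0), 0, Nat.zero_le _, rfl⟩
  have hLmem : ∃ i ≤ m, PP.level (p i) = PP.minLevel p m := Nat.sInf_mem hSne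
  have hLle : ∀ i, i ≤ m → PP.minLevel p m ≤ PP.level (p i) :=
    fun i hi => Nat.sInf_le ⟨i, hi, rfl⟩
  set L := PP.minLevel p m with hL
  obtain ⟨i0, hi0m, hi0⟩ := hLmem
  set B : Finset ℕ := (Finset.range (m + 1)).filter (fun i => PP.level (p i) = L) with hB
  have hBne : B.Nonempty := by
    refine ⟨i0, ?_⟩
    simp only [hB, Finset.mem_filter, Finset.mem_range, Nat.lt_succ_iff]
    exact ⟨hi0m, hi0⟩
  set a := B.min' hBne with ha
  set b := B.max' hBne with hbdef
  have hamem : a ∈ B := B.min'_mem hBne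
  have hbmem : b ∈ B := B.max'_mem hBne
  have hamem' : a ≤ m ∧ PP.level (p a) = L := by
    simpa only [hB, Finset.mem_filter, Finset.mem_range, Nat.lt_succ_iff] using hamem
  have hbmem' : b ≤ m ∧ PP.level (p b) = L := by
    simpa only [hB, Finset.mem_filter, Finset.mem_range, Nat.lt_succ_iff] using hbmem
  obtain ⟨haM, haL⟩ := hamem'
  obtain ⟨hbM, hbL⟩ := hbmem'
  have hab : a ≤ b := B.min'_le b hbmem
  have hmemB : ∀ i, i ≤ m → PP.level (p i) = L → a ≤ i ∧ i ≤ b := by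
    intro i him hil
    have hiB : i ∈ B := by
      simp only [hB, Finset.mem_filter, Finset.mem_range, Nat.lt_succ_iff]
      exact ⟨him, hil⟩
    exact ⟨B.min'_le i hiB, B.le_max' i hiB⟩
  -- min level of a subpath is L
  have hminsub : ∀ (f : ℕ → ℕ) (mm : ℕ), (∀ i, i ≤ mm → f i ≤ m) →
      PP.level (p (f 0)) = L → PP.minLevel (fun i => p (f i)) mm = L := by
    intro f mm hfm h0
    have hne' : {l | ∃ i ≤ mm, PP.level ((fun i => p (f i)) i) = l}.Nonempty :=
      ⟨PP.level (p (f 0)), 0, Nat.zero_le _, rfl⟩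
    refine le_antisymm (Nat.sInf_le ⟨0, Nat.zero_le _, h0⟩) (le_csInf hne' ?_)
    rintro l ⟨i, hi, rfl⟩
    exact hLle (f i) (hfm i hi)
  -- generic application of AscGood to a reindexed subpath
  have key : ∀ (f : ℕ → ℕ) (mm rr gg : ℕ), 1 ≤ rr → mm + 1 = 2 * rr + gg →
      (∀ i j, i ≤ mm → j ≤ mm → f i = f j → i = j) →
      (∀ i, i ≤ mm → f i ≤ m) →
      (∀ i, i < mm → T.Adj (p (f i)) (p (f (i + 1)))) →
      PP.level (p (f 0)) = L →
      (∀ i, i < rr → φ (p (f i)) = φ (p (f (rr + gg + i)))) →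
      rr < ({i : ℕ | rr ≤ i ∧ i < rr + gg ∧ PP.level (p (f i)) = L} : Set ℕ).ncard := by
    intro f mm rr gg hrr hmg hinj hfm hadj h0 hrep
    have hps : IsPathSeq T (fun i => p (f i)) mm :=
      ⟨fun i j hi hj he => hinj i j hi hj (hp.1 _ _ (hfm i hi) (hfm j hj) he), hadj⟩
    have hmin := hminsub f mm hfm h0
    have hconc := hG mm (fun i => p (f i)) hps (by simp only [hmin]; exact h0)
      rr gg hrr hmg hrep
    simpa only [hmin] using hconc
  -- cardinality bound via intervals
  have hcard_le : ∀ (s : Set ℕ) (x y : ℕ), s ⊆ Set.Ico x y → s.ncard ≤ y - x := by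
    intro s x y hs
    calc s.ncard ≤ (Set.Ico x y).ncard := Set.ncard_le_ncard hs (Set.finite_Ico x y)
      _ = y - x := by
          rw [show Set.Ico x y = ↑(Finset.Ico x y) from (Finset.coe_Ico x y).symm,
            Set.ncard_coe_finset, Nat.card_Ico]
  -- Forward ascending subpath starting at a (applicable when a < r)
  have F1 : a < r → r - a < (b - a + 1) - (r - a) := by
    intro har
    have K1 := key (fun i => a + i) (m - a) (r - a) a (by omega) (by omega)
      (fun i j _ _ hij => by have : a + i = a + j := hij; omega)
      (fun i hi => show a + i ≤ m by omega)
      (fun i hi => hp.2 (a + i) (by omega)) haL ?_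
    · refine lt_of_lt_of_le K1 (hcard_le _ (r - a) (b - a + 1) ?_)
      rintro i ⟨h1, h2, h3⟩
      have := hmemB (a + i) (by omega) h3
      exact ⟨h1, by omega⟩
    · intro i hi
      show φ (p (a + i)) = φ (p (a + (r - a + a + i)))
      have e : a + (r - a + a + i) = (a + i) + r := by omega
      rw [e]
      exact hcon (a + i) (by omega)
  -- Reversed ascending subpath starting at b (applicable when r ≤ b)
  have F2 : r ≤ b → (b + 1 - r) < (b - a + 1) - (b + 1 - r) := by
    intro hbr
    have K2 := key (fun i => b - i) b (b + 1 - r) (m - b) (by omega) (by omega)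
      (fun i j hi hj hij => by have : b - i = b - j := hij; omega)
      (fun i hi => show b - i ≤ m by omega) ?_ hbL ?_
    · refine lt_of_lt_of_le K2 (hcard_le _ (b + 1 - r) (b - a + 1) ?_)
      rintro i ⟨h1, h2, h3⟩
      have hile : i ≤ b := by omega
      have := hmemB (b - i) (by omega) h3
      exact ⟨h1, by omega⟩
    · intro i hi
      show T.Adj (p (b - i)) (p (b - (i + 1)))
      have e : b - (i + 1) + 1 = b - i := by omega
      exact e ▸ (hp.2 (b - (i + 1)) (by omega)).symm
    · intro i hi
      show φ (p (b - i)) = φ (p (b - (b + 1 - r + (m - b) + i)))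
      have e1 : b - (b + 1 - r + (m - b) + i) = b - r - i := by omega
      have e2 : (b - r - i) + r = b - i := by omega
      rw [e1, ← e2]
      exact (hcon (b - r - i) (by omega)).symm
  rcases Nat.lt_or_ge a r with h1 | h1
  · rcases Nat.lt_or_ge b r with h2 | h2
    · have := F1 h1; omega
    · have := F1 h1; have := F2 h2; omega
  · have := F2 (le_trans h1 hab); omega
end

section
/- For every integer n ≥ 1, the real-number inequality ∑_{k=0}^{⌊(n−1)/2⌋} (2n − 4k − 1)/(2k + 1) ≥ n·ln(n) − 3n holds. -/
/-! Writing `(2n - 4k - 1)/(2k + 1) = (2n + 1)/(2k + 1) - 2`, the sum becomes `(2n + 1) S - 2N`,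
where `S` is the sum of the reciprocals of the first `N = ⌊(n-1)/2⌋ + 1` odd numbers and
`n ≤ 2N ≤ n + 1`. Summing `log (2k + 3) - log (2k + 1) ≤ 2/(2k + 1)` (from `log x ≤ x - 1`)
gives `log n ≤ log (2N + 1) ≤ 2S`, hence `(2n + 1) S - 2N ≥ n log n - (n + 1)`. -/

open Finset

lemma log_two_mul_add_one_le_two_mul_sum_inv_odd (N : ℕ) :
    Real.log (2 * N + 1) ≤ 2 * ∑ k ∈ range N, 1 / (2 * (k : ℝ) + 1) := by
  induction N with
  | zero => simp
  | succ N ih =>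
    have hpos : (0 : ℝ) < 2 * N + 1 := by positivity
    have hstep :
        Real.log (2 * (N + 1) + 1) - Real.log (2 * N + 1) ≤ 2 * (1 / (2 * (N : ℝ) + 1)) :=
      calc Real.log (2 * (N + 1) + 1) - Real.log (2 * N + 1)
          = Real.log ((2 * (N + 1) + 1) / (2 * N + 1)) :=
            (Real.log_div (by positivity) hpos.ne').symm
        _ ≤ (2 * (N + 1) + 1) / (2 * N + 1) - 1 := Real.log_le_sub_one_of_pos (by positivity)
        _ = 2 * (1 / (2 * (N : ℝ) + 1)) := by field_simp; ring
    rw [sum_range_succ, mul_add]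
    push_cast
    linarith

lemma sum_range_sub_div_odd (x : ℝ) (N : ℕ) :
    ∑ k ∈ range N, (x - 4 * (k : ℝ) - 1) / (2 * (k : ℝ) + 1)
      = (x + 1) * ∑ k ∈ range N, 1 / (2 * (k : ℝ) + 1) - 2 * N := by
  rw [mul_sum, show (2 : ℝ) * N = ∑ _k ∈ range N, (2 : ℝ) by simp [mul_comm],
    ← sum_sub_distrib]
  refine sum_congr rfl fun k _ => ?_
  have : (2 : ℝ) * k + 1 ≠ 0 := by positivity
  field_simp
  ring

/-- For every integer `n ≥ 1`,
`∑_{k=0}^{⌊(n−1)/2⌋} (2n − 4k − 1)/(2k + 1) ≥ n·ln(n) − 3n` as real numbers. -/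
theorem stmt12 (n : ℕ) (hn : 1 ≤ n) :
    (n : ℝ) * Real.log n - 3 * n ≤
      ∑ k ∈ Finset.range ((n - 1) / 2 + 1),
        (2 * (n : ℝ) - 4 * (k : ℝ) - 1) / (2 * (k : ℝ) + 1) := by
  set N := (n - 1) / 2 + 1
  have hn_le : (n : ℝ) ≤ 2 * N := by exact_mod_cast (by omega : n ≤ 2 * N)
  have hN_le : 2 * (N : ℝ) ≤ n + 1 := by exact_mod_cast (by omega : 2 * N ≤ n + 1)
  have hn_one : (1 : ℝ) ≤ n := by exact_mod_cast hn
  set S := ∑ k ∈ range N, 1 / (2 * (k : ℝ) + 1)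
  have hS : 0 ≤ S := sum_nonneg fun k _ => by positivity
  have hlog : Real.log n ≤ 2 * S :=
    (Real.log_le_log (by linarith) (by linarith)).trans
      (log_two_mul_add_one_le_two_mul_sum_inv_odd N)
  rw [sum_range_sub_div_odd]
  nlinarith [mul_le_mul_of_nonneg_left hlog (by linarith : (0 : ℝ) ≤ n)]
end

section
/- For every n ≥ 1 and every sequence of color lists L₁, …, L_n each of size at least 33, there is a choice s₁, …, s_n with sᵢ ∈ Lᵢ for all i such that the sequence s₁…s_n contains no factor (block of consecutive terms) of the form x₁…x_r y₁…y_g x₁…x_r with r ≥ 1 and 0 ≤ g ≤ r. In particular, s₁…s_n is nonrepetitive (contains no factor x₁…x_r x₁…x_r). -/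
/-!
Count the near-repetition-free words `w` of length `n` with `w[i] ∈ L i`; call their number
`C n`. Appending a letter to such a word yields a bad word only if the new word ends in `x y x`
with `|y| ≤ |x|`, and then it is determined by `|x|`, `|y|` and its prefix before the last `x`,
which is again good. So at most `∑ r, (r + 2) * C (n - r)` of the `C n * |L n|` one-letter
extensions are bad. If `C` has grown by a factor 4 at every step so far, this sum is at most
`4 * C n`, so with at least 8 colours per position `C (n + 1) ≥ 8 * C n - 4 * C n = 4 * C n`,
and by induction `C n > 0`.
-/

open Finset

variable {α : Type*}

def NearRepFree (w : List α) : Prop :=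
  ∀ x y : List α, x ≠ [] → y.length ≤ x.length → ¬ x ++ y ++ x <:+: w

theorem nearRepFree_nil : NearRepFree ([] : List α) := fun _ _ hx _ h =>
  hx (List.append_eq_nil_iff.mp (List.append_eq_nil_iff.mp (List.infix_nil.mp h)).1).1

theorem NearRepFree.mono {v w : List α} (hw : NearRepFree w) (hvw : v <:+: w) :
    NearRepFree v :=
  fun x y hx hy h => hw x y hx hy (h.trans hvw)

theorem NearRepFree.exists_suffix_of_not_append {v : List α} {c : α} (hv : NearRepFree v)
    (h : ¬ NearRepFree (v ++ [c])) :
    ∃ x y : List α, x ≠ [] ∧ y.length ≤ x.length ∧ x ++ y ++ x <:+ v ++ [c] := by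
  simp only [NearRepFree, not_forall, not_not] at h
  obtain ⟨x, y, hx, hy, hxyx⟩ := h
  exact ⟨x, y, hx, hy, (List.infix_concat_iff.mp hxyx).resolve_right (hv x y hx hy)⟩

theorem NearRepFree.exists_getD_ne {w : List α} (hw : NearRepFree w) (d : α) {a r g : ℕ}
    (hr : 1 ≤ r) (hg : g ≤ r) (hlen : a + 2 * r + g ≤ w.length) :
    ∃ i < r, w.getD (a + i) d ≠ w.getD (a + r + g + i) d := by
  by_contra! heq
  have hcopy : ((w.drop a).drop (r + g)).take r = (w.drop a).take r := by
    refine List.ext_getElem (by simp only [List.length_take, List.length_drop]; omega)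
      fun i hi _ => ?_
    simp only [List.length_take, List.length_drop] at hi
    have hi_eq := heq i (by omega)
    rw [List.getD_eq_getElem _ _ (by omega), List.getD_eq_getElem _ _ (by omega)] at hi_eq
    simp [hi_eq, Nat.add_assoc]
  have hfactor : (w.drop a).take r ++ ((w.drop a).drop r).take g ++ (w.drop a).take r =
      (w.drop a).take (r + g + r) := by
    rw [List.take_add, List.take_add, hcopy, List.drop_drop]
  refine hw ((w.drop a).take r) (((w.drop a).drop r).take g)
    (List.ne_nil_of_length_pos (by simp only [List.length_take, List.length_drop]; omega))
    (by simp only [List.length_take, List.length_drop]; omega) ?_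
  rw [hfactor]
  exact (List.take_prefix _ _).isInfix.trans (List.drop_suffix _ _).isInfix

theorem eq_of_take_eq_of_suffix {u u' x y x' y' : List α} (hxyx : x ++ y ++ x <:+ u)
    (hxyx' : x' ++ y' ++ x' <:+ u') (hx : x.length = x'.length) (hy : y.length = y'.length)
    (hu : u.length = u'.length)
    (htake : u.take (u.length - x.length) = u'.take (u'.length - x'.length)) : u = u' := by
  obtain ⟨p, rfl⟩ := hxyx
  obtain ⟨p', rfl⟩ := hxyx'
  simp only [← List.append_assoc, List.length_append] at htake hu ⊢
  rw [List.take_left' (by simp only [List.length_append]; omega),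
    List.take_left' (by simp only [List.length_append]; omega)] at htake
  obtain ⟨hpx, rfl⟩ := List.append_inj' htake hy
  obtain ⟨rfl, rfl⟩ := List.append_inj' hpx hx
  rfl

variable [DecidableEq α]

def appendLetter (W : Finset (List α)) (A : Finset α) : Finset (List α) :=
  (W ×ˢ A).image fun p => p.1 ++ [p.2]

theorem mem_appendLetter {W : Finset (List α)} {A : Finset α} {u : List α} :
    u ∈ appendLetter W A ↔ ∃ v ∈ W, ∃ c ∈ A, v ++ [c] = u := by
  simp [appendLetter, and_assoc]

theorem card_appendLetter {W : Finset (List α)} {A : Finset α} {n : ℕ}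
    (hW : ∀ w ∈ W, w.length = n) : (appendLetter W A).card = W.card * A.card := by
  rw [appendLetter, card_image_of_injOn, card_product]
  rintro ⟨v, c⟩ hvc ⟨v', c'⟩ hvc' h
  simp only [coe_product, Set.mem_prod, mem_coe] at hvc hvc'
  obtain ⟨rfl, h⟩ := List.append_inj h (by rw [hW v hvc.1, hW v' hvc'.1])
  simp_all

open scoped Classical in
noncomputable def goodWords (L : ℕ → Finset α) : ℕ → Finset (List α)
  | 0 => {[]}
  | n + 1 => (appendLetter (goodWords L n) (L n)).filter NearRepFree

theorem mem_goodWords {L : ℕ → Finset α} {n : ℕ} {w : List α} :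
    w ∈ goodWords L n ↔
      w.length = n ∧ (∀ i (hi : i < w.length), w[i] ∈ L i) ∧ NearRepFree w := by
  induction n generalizing w with
  | zero =>
    simp only [goodWords, mem_singleton, List.length_eq_zero_iff]
    constructor
    · rintro rfl
      exact ⟨rfl, by simp, nearRepFree_nil⟩
    · exact fun h => h.1
  | succ n ih =>
    simp only [goodWords, mem_filter, mem_appendLetter, ih]
    constructor
    · rintro ⟨⟨v, ⟨rfl, hvL, -⟩, c, hc, rfl⟩, hw⟩
      refine ⟨by simp, fun i hi => ?_, hw⟩
      rw [List.getElem_append]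
      split_ifs with h
      · exact hvL i h
      · simp only [List.length_append, List.length_singleton] at hi
        obtain rfl : i = v.length := by omega
        simpa using hc
    · rintro ⟨hlen, hL, hw⟩
      obtain ⟨v, c, rfl⟩ := (w.eq_nil_or_concat').resolve_left (by rintro rfl; simp at hlen)
      simp only [List.length_append, List.length_singleton, Nat.add_right_cancel_iff] at hlen
      refine ⟨⟨v, ⟨hlen, fun i hi => ?_, hw.mono (List.prefix_append v [c]).isInfix⟩, c, ?_, rfl⟩,
        hw⟩
      · rw [← List.getElem_append_left hi]
        exact hL i (by simp only [List.length_append, List.length_singleton]; omega)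
      · simpa [hlen] using hL v.length (by simp)

theorem length_of_mem_goodWords {L : ℕ → Finset α} {n : ℕ} {w : List α}
    (hw : w ∈ goodWords L n) : w.length = n :=
  (mem_goodWords.mp hw).1

theorem take_mem_goodWords {L : ℕ → Finset α} {n k : ℕ} {w : List α} (hw : w ∈ goodWords L n)
    (hk : k ≤ n) : w.take k ∈ goodWords L k := by
  obtain ⟨hlen, hL, hfree⟩ := mem_goodWords.mp hw
  refine mem_goodWords.mpr ⟨by simp only [List.length_take]; omega, fun i hi => ?_,
    hfree.mono (List.take_prefix k w).isInfix⟩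
  simpa using hL i (by simp at hi; omega)

section Counting

open scoped Classical

variable (L : ℕ → Finset α) (n : ℕ)

theorem card_goodWords_succ_add_card_bad :
    (goodWords L (n + 1)).card +
        ((appendLetter (goodWords L n) (L n)).filter fun u => ¬ NearRepFree u).card =
      (goodWords L n).card * (L n).card := by
  rw [goodWords, card_filter_add_card_filter_not,
    card_appendLetter fun _ => length_of_mem_goodWords]

theorem card_bad_le :
    ((appendLetter (goodWords L n) (L n)).filter fun u => ¬ NearRepFree u).card ≤
      ∑ r ∈ range (n + 1), (r + 2) * (goodWords L (n - r)).card := by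
  set B := (appendLetter (goodWords L n) (L n)).filter fun u => ¬ NearRepFree u
  have hB : ∀ u ∈ B, ∃ v ∈ goodWords L n, ∃ c, v ++ [c] = u ∧ ¬ NearRepFree u := by
    intro u hu
    obtain ⟨hext, hbad⟩ := mem_filter.mp hu
    obtain ⟨v, hv, c, -, rfl⟩ := mem_appendLetter.mp hext
    exact ⟨v, hv, c, rfl, hbad⟩
  let endsWith (r g : ℕ) := B.filter fun u =>
    ∃ x y : List α, x.length = r + 1 ∧ y.length = g ∧ x ++ y ++ x <:+ u
  have hcover : B ⊆ (range (n + 1)).biUnion fun r => (range (r + 2)).biUnion (endsWith r) := by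
    intro u hu
    obtain ⟨v, hv, c, rfl, hbad⟩ := hB u hu
    obtain ⟨x, y, hx, hy, hsuf⟩ :=
      (mem_goodWords.mp hv).2.2.exists_suffix_of_not_append hbad
    have hlen := hsuf.length_le
    simp only [List.length_append, List.length_singleton, length_of_mem_goodWords hv] at hlen
    have hx1 := List.length_pos_of_ne_nil hx
    simp only [mem_biUnion, mem_range, endsWith, mem_filter]
    exact ⟨x.length - 1, by omega, y.length, by omega, hu, x, y, by omega, rfl, hsuf⟩
  have hendsWith (r g : ℕ) : (endsWith r g).card ≤ (goodWords L (n - r)).card := by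
    have hlen : ∀ u ∈ endsWith r g, u.length = n + 1 := by
      intro u hu
      obtain ⟨v, hv, c, rfl, -⟩ := hB u (mem_filter.mp hu).1
      simp [length_of_mem_goodWords hv]
    refine card_le_card_of_injOn (List.take (n - r)) (fun u hu => ?_)
      fun u hu u' hu' htake => ?_
    · obtain ⟨v, hv, c, rfl, -⟩ := hB u (mem_filter.mp hu).1
      rw [mem_coe, List.take_append_of_le_length (by rw [length_of_mem_goodWords hv]; omega)]
      exact take_mem_goodWords hv (by omega)
    · obtain ⟨-, x, y, hx, hy, hsuf⟩ := mem_filter.mp hu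
      obtain ⟨-, x', y', hx', hy', hsuf'⟩ := mem_filter.mp hu'
      refine eq_of_take_eq_of_suffix hsuf hsuf' (hx.trans hx'.symm) (hy.trans hy'.symm)
        ((hlen u hu).trans (hlen u' hu').symm) ?_
      rwa [hlen u hu, hlen u' hu', hx, hx', Nat.add_sub_add_right]
  calc B.card
      ≤ ∑ r ∈ range (n + 1), ∑ g ∈ range (r + 2), (endsWith r g).card :=
        (card_le_card hcover).trans (card_biUnion_le.trans (sum_le_sum fun r _ => card_biUnion_le))
    _ ≤ ∑ r ∈ range (n + 1), ∑ _g ∈ range (r + 2), (goodWords L (n - r)).card :=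
        sum_le_sum fun r _ => sum_le_sum fun g _ => hendsWith r g
    _ = ∑ r ∈ range (n + 1), (r + 2) * (goodWords L (n - r)).card := by simp

end Counting

theorem sum_range_sub_le_two_mul {a : ℕ → ℕ} {n : ℕ} (ha : ∀ k < n, 4 * a k ≤ a (k + 1)) :
    ∑ r ∈ range (n + 1), a (n - r) ≤ 2 * a n := by
  induction n with
  | zero => simp only [zero_add, range_one, sum_singleton, Nat.sub_zero]; omega
  | succ n ih =>
    rw [sum_range_succ']
    simp only [Nat.add_sub_add_right, Nat.sub_zero]
    have := ih fun k hk => ha k (by omega)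
    have := ha n (by omega)
    omega

theorem sum_range_mul_sub_le_four_mul {a : ℕ → ℕ} {n : ℕ}
    (ha : ∀ k < n, 4 * a k ≤ a (k + 1)) :
    ∑ r ∈ range (n + 1), (r + 2) * a (n - r) ≤ 4 * a n := by
  induction n with
  | zero => simp only [zero_add, range_one, sum_singleton, Nat.sub_zero]; omega
  | succ n ih =>
    have hshift : ∑ r ∈ range (n + 1), (r + 1 + 2) * a (n + 1 - (r + 1)) =
        ∑ r ∈ range (n + 1), (r + 2) * a (n - r) + ∑ r ∈ range (n + 1), a (n - r) := by
      rw [← sum_add_distrib]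
      exact sum_congr rfl fun r _ => by rw [Nat.add_sub_add_right]; ring
    rw [sum_range_succ', hshift, Nat.sub_zero]
    have := ih fun k hk => ha k (by omega)
    have := sum_range_sub_le_two_mul (n := n) fun k hk => ha k (by omega)
    have := ha n (by omega)
    omega

theorem four_mul_card_goodWords_le {L : ℕ → Finset α} {n : ℕ} (hL : ∀ i ≤ n, 8 ≤ (L i).card) :
    4 * (goodWords L n).card ≤ (goodWords L (n + 1)).card := by
  induction n using Nat.strong_induction_on with
  | _ n ih =>
    have hbad := (card_bad_le L n).trans
      (sum_range_mul_sub_le_four_mul fun k hk => ih k hk fun i hi => hL i (by omega))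
    have hsplit := card_goodWords_succ_add_card_bad L n
    have := Nat.mul_le_mul_left (goodWords L n).card (hL n le_rfl)
    omega

theorem card_goodWords_pos {L : ℕ → Finset α} {n : ℕ} (hL : ∀ i < n, 8 ≤ (L i).card) :
    0 < (goodWords L n).card := by
  induction n with
  | zero => simp [goodWords]
  | succ n ih =>
    have := four_mul_card_goodWords_le fun i hi => hL i (Nat.lt_succ_of_le hi)
    have := ih fun i hi => hL i (by omega)
    omega

theorem stmt16_general (n : ℕ) (L : ℕ → Finset ℕ)
    (hL : ∀ i < n, 33 ≤ (L i).card) :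
    ∃ s : ℕ → ℕ, (∀ i < n, s i ∈ L i) ∧
      (∀ a r g : ℕ, 1 ≤ r → g ≤ r → a + 2 * r + g ≤ n →
        ∃ i < r, s (a + i) ≠ s (a + r + g + i)) ∧
      (∀ a r : ℕ, 1 ≤ r → a + 2 * r ≤ n →
        ∃ i < r, s (a + i) ≠ s (a + r + i)) := by
  obtain ⟨w, hw⟩ :=
    card_pos.mp (card_goodWords_pos fun i hi => (by omega : 8 ≤ 33).trans (hL i hi))
  obtain ⟨hlen, hletters, hfree⟩ := mem_goodWords.mp hw
  have hnear (a r g : ℕ) (hr : 1 ≤ r) (hg : g ≤ r) (h : a + 2 * r + g ≤ n) :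
      ∃ i < r, w.getD (a + i) 0 ≠ w.getD (a + r + g + i) 0 :=
    hfree.exists_getD_ne 0 hr hg (hlen ▸ h)
  refine ⟨fun i => w.getD i 0, fun i hi => ?_, hnear, fun a r hr h => hnear a r 0 hr r.zero_le h⟩
  show w.getD i 0 ∈ L i
  rw [List.getD_eq_getElem _ _ (hlen ▸ hi)]
  exact hletters i _

/-- For every `n ≥ 1` and color lists `L 0, …, L (n-1)`, each of size at least 33,
there is a choice `s i ∈ L i` such that the sequence `s 0 … s (n-1)` contains no factor
of the form `x₁…x_r y₁…y_g x₁…x_r` with `r ≥ 1` and `0 ≤ g ≤ r`; in particular it is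
nonrepetitive (contains no factor `x₁…x_r x₁…x_r`). -/
theorem stmt16 (n : ℕ) (hn : 1 ≤ n) (L : ℕ → Finset ℕ)
    (hL : ∀ i < n, 33 ≤ (L i).card) :
    ∃ s : ℕ → ℕ, (∀ i < n, s i ∈ L i) ∧
      (∀ a r g : ℕ, 1 ≤ r → g ≤ r → a + 2 * r + g ≤ n →
        ∃ i < r, s (a + i) ≠ s (a + r + g + i)) ∧
      (∀ a r : ℕ, 1 ≤ r → a + 2 * r ≤ n →
        ∃ i < r, s (a + i) ≠ s (a + r + i)) :=
  stmt16_general n L hL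
end
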